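/- arXiv:1908.09065 — 2 statements merged into one kernel-verified Lean document; each statement's English description precedes it below -/
import Mathlib

section
/- Let (G, S) be a rooted graph with μ(G, S) ≤ 1, let W be a subgraph of G, and let P be a path of W all of whose internal vertices have degree 2 in W, such that P_mid is non-empty, W − V(P_mid) contains an S-cycle, and G has no (W, P_mid, W − V(P_mid))-path. Let a and b be the gates of P. Then: (1) {a, b} separates P_mid from W − V(P_mid) in G; and (2) if C is an S-cycle of G containing a vertex of P_mid, then C contains both a and b, C contains a vertex of P_v for each endpoint v of P, and moreover if C does not contain an endpoint v of P, then C contains a (W, P_v, W − V(P_v))-path. -/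
open scoped Classical

/-- A finite multigraph (possibly with loops and parallel edges), with vertices and
edges labelled by natural numbers. `ends e` gives the (unordered) pair of endpoints. -/
structure Multigraph where
  verts : Finset ℕ
  edges : Finset ℕ
  ends : ℕ → Sym2 ℕ
  ends_mem : ∀ e ∈ edges, ∀ x ∈ ends e, x ∈ verts

namespace Multigraph

/-- `W` is a subgraph of `G`. -/
def IsSubgraph (W G : Multigraph) : Prop :=
  W.verts ⊆ G.verts ∧ W.edges ⊆ G.edges ∧ ∀ e ∈ W.edges, W.ends e = G.ends e

/-- Delete a set of vertices (and all incident edges). -/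
noncomputable def deleteVerts (G : Multigraph) (T : Finset ℕ) : Multigraph where
  verts := G.verts \ T
  edges := G.edges.filter (fun e => ∀ x ∈ G.ends e, x ∉ T)
  ends := G.ends
  ends_mem := by
    intro e he x hx
    rw [Finset.mem_filter] at he
    rw [Finset.mem_sdiff]
    exact ⟨G.ends_mem e he.1 x hx, he.2 x hx⟩

/-- Delete a set of edges. -/
def deleteEdges (G : Multigraph) (X : Finset ℕ) : Multigraph where
  verts := G.verts
  edges := G.edges \ X
  ends := G.ends
  ends_mem := fun e he x hx => G.ends_mem e (Finset.mem_sdiff.mp he).1 x hx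

/-- Union of two multigraphs. -/
noncomputable def union (W X : Multigraph) : Multigraph where
  verts := W.verts ∪ X.verts
  edges := W.edges ∪ X.edges
  ends := fun e => if e ∈ W.edges then W.ends e else X.ends e
  ends_mem := by
    intro e he x hx
    rw [Finset.mem_union] at he ⊢
    by_cases h : e ∈ W.edges
    · simp only [h, if_true] at hx
      exact Or.inl (W.ends_mem e h x hx)
    · simp only [h, if_false] at hx
      exact Or.inr (X.ends_mem e (he.resolve_left h) x hx)

/-- The degree of a vertex in a multigraph; a loop contributes 2. -/
noncomputable def degree (W : Multigraph) (v : ℕ) : ℕ :=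
  ∑ e ∈ W.edges, (if W.ends e = s(v, v) then 2 else if v ∈ W.ends e then 1 else 0)

/-- `vs = [v₀, …, vₙ]`, `es = [e₁, …, eₙ]` form a walk in `G`
(the `i`-th edge joins the `i`-th and `(i+1)`-st vertices). -/
def IsWalk (G : Multigraph) (vs es : List ℕ) : Prop :=
  vs.length = es.length + 1 ∧
  (∀ v ∈ vs, v ∈ G.verts) ∧
  (∀ e ∈ es, e ∈ G.edges) ∧
  ∀ i, i < es.length → G.ends (es.getD i 0) = s(vs.getD i 0, vs.getD (i + 1) 0)

/-- `C` is a cycle of `G`: a subgraph of `G` consisting of (cyclically ordered) distinct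
vertices `vs` and distinct edges `es`, the `i`-th edge joining consecutive vertices.
Loops and pairs of parallel edges count as cycles. -/
def IsCycleOf (G C : Multigraph) : Prop :=
  C.IsSubgraph G ∧
  ∃ vs es : List ℕ, vs.Nodup ∧ es.Nodup ∧ es ≠ [] ∧ vs.length = es.length ∧
    C.verts = vs.toFinset ∧ C.edges = es.toFinset ∧
    ∀ i, i < es.length →
      C.ends (es.getD i 0) = s(vs.getD i 0, vs.getD ((i + 1) % vs.length) 0)

/-- An S-cycle of `(G, S)`: a cycle of `G` containing a vertex of `S`. -/
def IsSCycle (G : Multigraph) (S : Finset ℕ) (C : Multigraph) : Prop :=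
  IsCycleOf G C ∧ (C.verts ∩ S).Nonempty

/-- `μ(G, S) ≤ 1`: there are no two vertex-disjoint S-cycles. -/
def MuLeOne (G : Multigraph) (S : Finset ℕ) : Prop :=
  ∀ C₁ C₂, IsSCycle G S C₁ → IsSCycle G S C₂ → ¬ Disjoint C₁.verts C₂.verts

/-- `T` is an S-cycle hitting set of `(G, S)`. -/
def IsHittingSet (G : Multigraph) (S T : Finset ℕ) : Prop :=
  T ⊆ G.verts ∧ ∀ C, IsSCycle G S C → (C.verts ∩ T).Nonempty

/-- `τ(G, S) ≤ k`. -/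
def TauLe (G : Multigraph) (S : Finset ℕ) (k : ℕ) : Prop :=
  ∃ T, IsHittingSet G S T ∧ T.card ≤ k

/-- `P` is a path graph with vertex list `vs` and edge list `es`. -/
def IsPathGraph (P : Multigraph) (vs es : List ℕ) : Prop :=
  vs.Nodup ∧ es.Nodup ∧ vs.length = es.length + 1 ∧
  P.verts = vs.toFinset ∧ P.edges = es.toFinset ∧
  ∀ i, i < es.length → P.ends (es.getD i 0) = s(vs.getD i 0, vs.getD (i + 1) 0)

/-- `P` (with vertex list `vs` and edge list `es`) is a `W`-path in `G`:
a path with at least one edge, both endpoints in `W`, internal vertices outside `W`,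
and using no edge of `W`. -/
def IsWPathList (G W P : Multigraph) (vs es : List ℕ) : Prop :=
  P.IsSubgraph G ∧ IsPathGraph P vs es ∧ es ≠ [] ∧
  vs.getD 0 0 ∈ W.verts ∧ vs.getD (vs.length - 1) 0 ∈ W.verts ∧
  (∀ i, 0 < i → i < vs.length - 1 → vs.getD i 0 ∉ W.verts) ∧
  (∀ e ∈ es, e ∉ W.edges)

/-- `P` is a `W`-path in `G`. -/
def IsWPath (G W P : Multigraph) : Prop :=
  ∃ vs es, IsWPathList G W P vs es

/-- `P` is a `(W, F₁, F₂)`-path in `G`: a `W`-path with one endpoint in `F₁`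
and the other in `F₂`. -/
def IsWPathBtw (G W P : Multigraph) (F₁ F₂ : Finset ℕ) : Prop :=
  ∃ vs es, IsWPathList G W P vs es ∧
    ((vs.getD 0 0 ∈ F₁ ∧ vs.getD (vs.length - 1) 0 ∈ F₂) ∨
     (vs.getD 0 0 ∈ F₂ ∧ vs.getD (vs.length - 1) 0 ∈ F₁))

/-- `W` is an S-cycle subgraph of `(G, S)`: a subgraph whose every cycle is an S-cycle. -/
def IsSCycleSubgraph (G : Multigraph) (S : Finset ℕ) (W : Multigraph) : Prop :=
  W.IsSubgraph G ∧ ∀ C, IsCycleOf W C → (C.verts ∩ S).Nonempty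

/-- `X` is a `W`-extension: a `W`-path such that `W ∪ X` is an S-cycle subgraph. -/
def IsWExtension (G : Multigraph) (S : Finset ℕ) (W X : Multigraph) : Prop :=
  IsWPath G W X ∧ IsSCycleSubgraph G S (W.union X)

/-- `G` is connected. -/
def Connected (G : Multigraph) : Prop :=
  G.verts.Nonempty ∧
  ∀ u ∈ G.verts, ∀ v ∈ G.verts,
    ∃ vs es, IsWalk G vs es ∧ vs ≠ [] ∧ vs.getD 0 0 = u ∧ vs.getD (vs.length - 1) 0 = v

/-- `G` has no cycles. -/
def Acyclic (G : Multigraph) : Prop := ¬ ∃ C, IsCycleOf G C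

/-- `X` separates the vertex sets `A` and `B` in `G`: after deleting `X`, there is no
walk from a vertex of `A` to a vertex of `B`. -/
def Separates (G : Multigraph) (X A B : Finset ℕ) : Prop :=
  ¬ ∃ vs es, IsWalk (G.deleteVerts X) vs es ∧ vs ≠ [] ∧
      vs.getD 0 0 ∈ A ∧ vs.getD (vs.length - 1) 0 ∈ B

/-- `G` is a subdivision of `H`: each edge `e` of `H` is replaced by a path
(given by vertex list `pv e` and edge list `pe e`) between the images of its
endpoints under an injection `φ`; the paths are internally disjoint from each
other and from the branching vertices, and together they cover `G` exactly. -/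
def IsSubdivisionOf (H G : Multigraph) : Prop :=
  ∃ (φ : ℕ → ℕ) (pv pe : ℕ → List ℕ),
    Set.InjOn φ ↑H.verts ∧
    (∀ v ∈ H.verts, φ v ∈ G.verts) ∧
    (∀ e ∈ H.edges,
      IsWalk G (pv e) (pe e) ∧ pe e ≠ [] ∧
      (pv e).dropLast.Nodup ∧ (pv e).tail.Nodup ∧
      (∃ u v, H.ends e = s(u, v) ∧ (pv e).getD 0 0 = φ u ∧
        (pv e).getD ((pv e).length - 1) 0 = φ v) ∧
      (∀ x ∈ (pv e).tail.dropLast, ∀ w ∈ H.verts, x ≠ φ w)) ∧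
    (∀ e ∈ H.edges, ∀ f ∈ H.edges, e ≠ f →
      (∀ x ∈ (pv e).tail.dropLast, x ∉ (pv f).toFinset) ∧
      (∀ a ∈ pe e, a ∉ pe f)) ∧
    G.verts = H.verts.image φ ∪ H.edges.biUnion (fun e => (pv e).toFinset) ∧
    G.edges = H.edges.biUnion (fun e => (pe e).toFinset)

/-- `W` is an S-cycle `H`-subdivision in `(G, S)`: a subgraph of `G` that is a
subdivision of `H` and in which every cycle is an S-cycle. -/
def IsSCycleSubdivision (G : Multigraph) (S : Finset ℕ) (H W : Multigraph) : Prop :=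
  W.IsSubgraph G ∧ IsSubdivisionOf H W ∧ ∀ C, IsCycleOf W C → (C.verts ∩ S).Nonempty

/-- Build a multigraph on vertex set `{0, …, n-1}` whose edges are `0, …, l.length - 1`,
with the `i`-th edge joining the pair `l[i]`. -/
def mkGraph (n : ℕ) (l : List (ℕ × ℕ)) (h : ∀ p ∈ l, p.1 < n ∧ p.2 < n) : Multigraph where
  verts := Finset.range n
  edges := Finset.range l.length
  ends := fun e => s((l.getD e (0, 0)).1, (l.getD e (0, 0)).2)
  ends_mem := by
    intro e he x hx
    rw [Finset.mem_range] at he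
    have hm : l.getD e (0, 0) ∈ l := by
      rw [List.getD_eq_getElem l (0, 0) he]
      exact List.getElem_mem he
    rw [Sym2.mem_iff] at hx
    rw [Finset.mem_range]
    rcases hx with h1 | h2
    · exact h1 ▸ (h _ hm).1
    · exact h2 ▸ (h _ hm).2

/-- `θ₃`: two vertices joined by three parallel edges. -/
def theta3 : Multigraph := mkGraph 2 [(0,1),(0,1),(0,1)] (by decide)

/-- `K₃⁺`: the triangle with a parallel edge added to each of two distinct edges. -/
def K3plus : Multigraph := mkGraph 3 [(0,1),(1,2),(2,0),(0,1),(1,2)] (by decide)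

/-- `K₃⁺⁺⁺`: the triangle with a parallel edge added to every edge and one further
parallel edge added to one edge. -/
def K3ppp : Multigraph := mkGraph 3 [(0,1),(1,2),(2,0),(0,1),(1,2),(2,0),(0,1)] (by decide)

/-- The complete graph `K₄`. -/
def K4 : Multigraph := mkGraph 4 [(0,1),(0,2),(0,3),(1,2),(1,3),(2,3)] (by decide)

/-- `K₄⁺⁺`: `K₄` with a parallel edge added to each of two incident edges. -/
def K4pp : Multigraph := mkGraph 4 [(0,1),(0,2),(0,3),(1,2),(1,3),(2,3),(0,1),(0,2)] (by decide)

/-- `K₄⁺⁺⁺`: `K₄` with two parallel edges added to one edge. -/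
def K4ppp : Multigraph := mkGraph 4 [(0,1),(0,2),(0,3),(1,2),(1,3),(2,3),(0,1),(0,1)] (by decide)

/-- The wheel `W₄`: a 4-cycle `0123` plus a hub `4` joined to all rim vertices. -/
def W4 : Multigraph := mkGraph 5 [(0,1),(1,2),(2,3),(3,0),(4,0),(4,1),(4,2),(4,3)] (by decide)

/-- `W₄⁺`: `W₄` with a parallel edge added between the hub and one rim vertex. -/
def W4plus : Multigraph :=
  mkGraph 5 [(0,1),(1,2),(2,3),(3,0),(4,0),(4,1),(4,2),(4,3),(4,0)] (by decide)

/-- `W₄*`: `W₄` with an edge added between two rim vertices at distance 2. -/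
def W4star : Multigraph :=
  mkGraph 5 [(0,1),(1,2),(2,3),(3,0),(4,0),(4,1),(4,2),(4,3),(0,2)] (by decide)

/-- The wheel `W₅`: a 5-cycle plus a hub joined to all rim vertices. -/
def W5 : Multigraph :=
  mkGraph 6 [(0,1),(1,2),(2,3),(3,4),(4,0),(5,0),(5,1),(5,2),(5,3),(5,4)] (by decide)

/-- The complete bipartite graph `K₃,₃` with parts `{0,1,2}` and `{3,4,5}`. -/
def K33 : Multigraph :=
  mkGraph 6 [(0,3),(0,4),(0,5),(1,3),(1,4),(1,5),(2,3),(2,4),(2,5)] (by decide)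

/-- `K₃,₃⁺`: `K₃,₃` with an edge added between two vertices in the same part. -/
def K33plus : Multigraph :=
  mkGraph 6 [(0,3),(0,4),(0,5),(1,3),(1,4),(1,5),(2,3),(2,4),(2,5),(0,1)] (by decide)

end Multigraph

theorem nodup_getD_inj {l : List ℕ} (h : l.Nodup) {m n : ℕ} (hm : m < l.length) (hn : n < l.length)
    (he : l.getD m 0 = l.getD n 0) : m = n := by
  rw [List.getD_eq_getElem l 0 hm, List.getD_eq_getElem l 0 hn] at he
  rw [List.nodup_iff_injective_get] at h
  have := h (a₁ := ⟨m, hm⟩) (a₂ := ⟨n, hn⟩) (by simpa using he)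
  simpa using this

theorem nodup_of_getD_inj {l : List ℕ}
    (h : ∀ m n, m < l.length → n < l.length → l.getD m 0 = l.getD n 0 → m = n) : l.Nodup := by
  rw [List.nodup_iff_injective_get]
  rintro ⟨m, hm⟩ ⟨n, hn⟩ hmn
  have := h m n hm hn (by
    rw [List.getD_eq_getElem l 0 hm, List.getD_eq_getElem l 0 hn]; simpa using hmn)
  simpa using this

theorem getD_mem {l : List ℕ} {k : ℕ} (hk : k < l.length) : l.getD k 0 ∈ l := by
  rw [List.getD_eq_getElem l 0 hk]; exact List.getElem_mem hk

theorem mem_iff_getD {l : List ℕ} {x : ℕ} : x ∈ l ↔ ∃ k, k < l.length ∧ l.getD k 0 = x := by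
  rw [List.mem_iff_getElem]
  constructor
  · rintro ⟨k, hk, rfl⟩; exact ⟨k, hk, List.getD_eq_getElem l 0 hk⟩
  · rintro ⟨k, hk, h⟩; exact ⟨k, hk, by rw [← List.getD_eq_getElem l 0 hk, h]⟩

theorem getD_drop (l : List ℕ) (m t : ℕ) : (l.drop m).getD t 0 = l.getD (m + t) 0 := by
  by_cases h : m + t < l.length
  · rw [List.getD_eq_getElem _ 0 (by simp; omega), List.getD_eq_getElem l 0 h]
    simp [List.getElem_drop]
  · rw [List.getD_eq_default _ 0 (by simp; omega), List.getD_eq_default l 0 (by omega)]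

theorem getD_take (l : List ℕ) {m t : ℕ} (h : t < m) : (l.take m).getD t 0 = l.getD t 0 := by
  by_cases h2 : t < l.length
  · rw [List.getD_eq_getElem _ 0 (by simp; omega), List.getD_eq_getElem l 0 h2]
    simp [List.getElem_take]
  · rw [List.getD_eq_default _ 0 (by simp; omega), List.getD_eq_default l 0 (by omega)]

theorem getD_append_left {l1 l2 : List ℕ} {t : ℕ} (h : t < l1.length) :
    (l1 ++ l2).getD t 0 = l1.getD t 0 := by
  rw [List.getD_eq_getElem _ 0 (by simp; omega), List.getD_eq_getElem l1 0 h]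
  exact List.getElem_append_left h

theorem getD_append_right {l1 l2 : List ℕ} {t : ℕ} (h : l1.length ≤ t) :
    (l1 ++ l2).getD t 0 = l2.getD (t - l1.length) 0 := by
  by_cases h2 : t < l1.length + l2.length
  · rw [List.getD_eq_getElem _ 0 (by simp; omega), List.getD_eq_getElem l2 0 (by omega)]
    rw [List.getElem_append_right (by omega)]
  · rw [List.getD_eq_default _ 0 (by simp; omega), List.getD_eq_default l2 0 (by omega)]

theorem getD_rotate (l : List ℕ) {p t : ℕ} (ht : t < l.length) :
    (l.rotate p).getD t 0 = l.getD ((t + p) % l.length) 0 := by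
  have h1 : t < (l.rotate p).length := by simpa using ht
  rw [List.getD_eq_getElem _ 0 h1, List.getD_eq_getElem l 0 (Nat.mod_lt _ (by omega))]
  exact List.getElem_rotate l p t h1
open Multigraph

section Helpers
variable {G W C H : Multigraph}

theorem isSubgraph_trans {A B C : Multigraph} (h1 : A.IsSubgraph B) (h2 : B.IsSubgraph C) :
    A.IsSubgraph C :=
  ⟨h1.1.trans h2.1, h1.2.1.trans h2.2.1, fun e he => (h1.2.2 e he).trans (h2.2.2 e (h1.2.1 he))⟩

theorem deleteVerts_isSubgraph (G : Multigraph) (T : Finset ℕ) :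
    (G.deleteVerts T).IsSubgraph G :=
  ⟨Finset.sdiff_subset, Finset.filter_subset _ _, fun _ _ => rfl⟩

theorem isWalk_of_subgraph {ws fs : List ℕ} (h : IsWalk H ws fs) (hs : H.IsSubgraph G) :
    IsWalk G ws fs :=
  ⟨h.1, fun v hv => hs.1 (h.2.1 v hv), fun e he => hs.2.1 (h.2.2.1 e he),
    fun t ht => by rw [← hs.2.2 _ (h.2.2.1 _ (getD_mem (by omega)))]; exact h.2.2.2 t ht⟩

theorem isCycleOf_of_subgraph (h : IsCycleOf H C) (hs : H.IsSubgraph G) : IsCycleOf G C :=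
  ⟨isSubgraph_trans h.1 hs, h.2⟩

theorem isSCycle_of_subgraph {S : Finset ℕ} (h : IsSCycle H S C) (hs : H.IsSubgraph G) :
    IsSCycle G S C :=
  ⟨isCycleOf_of_subgraph h.1 hs, h.2⟩

theorem isWalk_drop {ws fs : List ℕ} (h : IsWalk G ws fs) {m : ℕ} (hm : m ≤ fs.length) :
    IsWalk G (ws.drop m) (fs.drop m) := by
  obtain ⟨hlen, hv, he, hends⟩ := h
  refine ⟨by simp; omega, fun v hv' => hv v (List.mem_of_mem_drop hv'),
    fun e he' => he e (List.mem_of_mem_drop he'), fun t ht => ?_⟩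
  rw [List.length_drop] at ht
  rw [getD_drop, getD_drop, getD_drop]
  have : m + t < fs.length := by omega
  rw [show m + (t+1) = (m+t) + 1 by omega]
  exact hends (m+t) this

theorem isWalk_take {ws fs : List ℕ} (h : IsWalk G ws fs) (m : ℕ) :
    IsWalk G (ws.take (m+1)) (fs.take m) := by
  obtain ⟨hlen, hv, he, hends⟩ := h
  refine ⟨by simp; omega, fun v hv' => hv v (List.mem_of_mem_take hv'),
    fun e he' => he e (List.mem_of_mem_take he'), fun t ht => ?_⟩
  rw [List.length_take] at ht
  have ht1 : t < m := by omega
  have ht2 : t < fs.length := by omega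
  rw [getD_take _ ht1, getD_take _ (show t < m+1 by omega), getD_take _ (show t+1 < m+1 by omega)]
  exact hends t ht2

theorem walk_edges_nodup {ws fs : List ℕ} (h : IsWalk G ws fs) (hnd : ws.Nodup) : fs.Nodup := by
  obtain ⟨hlen, hv, he, hends⟩ := h
  refine nodup_of_getD_inj fun m n hm hn hmn => ?_
  have h1 := hends m hm
  have h2 := hends n hn
  rw [hmn, h2] at h1
  rw [Sym2.eq_iff] at h1
  rcases h1 with ⟨ha, _⟩ | ⟨ha, hb⟩
  · exact nodup_getD_inj hnd (by omega) (by omega) ha.symm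
  · have e1 : n = m + 1 := nodup_getD_inj hnd (by omega) (by omega) ha
    have e2 : n + 1 = m := nodup_getD_inj hnd (by omega) (by omega) hb
    omega

end Helpers
open Multigraph

theorem walk_refine (G : Multigraph) (A B : Finset ℕ) (hAB : Disjoint A B) :
    ∀ N, ∀ ws fs : List ℕ, ws.length ≤ N → IsWalk G ws fs →
    ws ≠ [] → ws.getD 0 0 ∈ A → ws.getD (ws.length - 1) 0 ∈ B →
    ∃ ws' fs' : List ℕ, IsWalk G ws' fs' ∧ ws'.Nodup ∧ fs' ≠ [] ∧
      ws'.getD 0 0 ∈ A ∧ ws'.getD (ws'.length - 1) 0 ∈ B ∧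
      (∀ m, 0 < m → m < ws'.length - 1 → ws'.getD m 0 ∉ A ∧ ws'.getD m 0 ∉ B) ∧
      (∀ v ∈ ws', v ∈ ws) ∧ (∀ e ∈ fs', e ∈ fs) := by
  intro N
  induction N with
  | zero =>
    intro ws fs hN _ hne _ _
    exact absurd (List.length_eq_zero_iff.mp (Nat.le_zero.mp hN)) hne
  | succ N ih =>
    intro ws fs hN hw hne h0 hlast
    have hlen := hw.1
    have hlen1 : 0 < ws.length := List.length_pos_iff.mpr hne
    have hsingle : ws.length ≠ 1 := by
      intro h1
      rw [h1] at hlast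
      simp only [Nat.sub_self] at hlast
      exact Finset.disjoint_left.mp hAB h0 hlast
    by_cases hcA : ∃ m, 0 < m ∧ m < ws.length ∧ ws.getD m 0 ∈ A
    · obtain ⟨m, hm0, hmlt, hmA⟩ := hcA
      have hmfs : m ≤ fs.length := by omega
      have hw' := isWalk_drop hw hmfs
      have hne' : ws.drop m ≠ [] :=
        List.ne_nil_of_length_pos (by rw [List.length_drop]; omega)
      have h0' : (ws.drop m).getD 0 0 ∈ A := by
        rw [getD_drop]; simpa using hmA
      have hlast' : (ws.drop m).getD ((ws.drop m).length - 1) 0 ∈ B := by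
        rw [List.length_drop, getD_drop,
          show m + (ws.length - m - 1) = ws.length - 1 by omega]
        exact hlast
      obtain ⟨ws', fs', p1, p2, p3, p4, p5, p6, p7, p8⟩ :=
        ih (ws.drop m) (fs.drop m) (by simp; omega) hw' hne' h0' hlast'
      exact ⟨ws', fs', p1, p2, p3, p4, p5, p6,
        fun v hv => List.mem_of_mem_drop (p7 v hv),
        fun e he => List.mem_of_mem_drop (p8 e he)⟩
    by_cases hcB : ∃ m, m < ws.length - 1 ∧ ws.getD m 0 ∈ B
    · obtain ⟨m, hmlt, hmB⟩ := hcB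
      have hw' := isWalk_take hw m
      have hlt : (ws.take (m+1)).length = m + 1 := by simp; omega
      have hne' : ws.take (m+1) ≠ [] :=
        List.ne_nil_of_length_pos (by rw [hlt]; omega)
      have h0' : (ws.take (m+1)).getD 0 0 ∈ A := by
        rw [getD_take _ (by omega)]; exact h0
      have hlast' : (ws.take (m+1)).getD ((ws.take (m+1)).length - 1) 0 ∈ B := by
        rw [hlt, Nat.add_sub_cancel, getD_take _ (by omega)]; exact hmB
      obtain ⟨ws', fs', p1, p2, p3, p4, p5, p6, p7, p8⟩ :=
        ih (ws.take (m+1)) (fs.take m) (by rw [hlt]; omega) hw' hne' h0' hlast'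
      exact ⟨ws', fs', p1, p2, p3, p4, p5, p6,
        fun v hv => List.mem_of_mem_take (p7 v hv),
        fun e he => List.mem_of_mem_take (p8 e he)⟩
    by_cases hcD : ∃ m n, m < n ∧ n < ws.length ∧ ws.getD m 0 = ws.getD n 0
    · obtain ⟨m, n, hmn, hn, heq⟩ := hcD
      have hends := hw.2.2.2
      have hlt1 : (ws.take (m+1)).length = m + 1 := by simp; omega
      have hlt2 : (fs.take m).length = m := by simp; omega
      set ws2 := ws.take (m+1) ++ ws.drop (n+1) with hws2
      set fs2 := fs.take m ++ fs.drop n with hfs2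
      have hlws2 : ws2.length = m + 1 + (ws.length - (n+1)) := by
        rw [hws2, List.length_append, hlt1, List.length_drop]
      have hlfs2 : fs2.length = m + (fs.length - n) := by
        rw [hfs2, List.length_append, hlt2, List.length_drop]
      have hw2 : IsWalk G ws2 fs2 := by
        refine ⟨by omega, ?_, ?_, ?_⟩
        · intro v hv
          rcases List.mem_append.mp hv with h | h
          · exact hw.2.1 v (List.mem_of_mem_take h)
          · exact hw.2.1 v (List.mem_of_mem_drop h)
        · intro e he
          rcases List.mem_append.mp he with h | h
          · exact hw.2.2.1 e (List.mem_of_mem_take h)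
          · exact hw.2.2.1 e (List.mem_of_mem_drop h)
        · intro t ht
          rw [hlfs2] at ht
          by_cases htm : t < m
          · rw [hws2, hfs2, getD_append_left (by omega), getD_append_left (by omega),
              getD_append_left (by omega), getD_take _ (by omega), getD_take _ (by omega),
              getD_take _ (by omega)]
            exact hends t (by omega)
          · have htm' : m ≤ t := by omega
            have hfst : fs2.getD t 0 = fs.getD (n + (t - m)) 0 := by
              rw [hfs2, getD_append_right (by omega), hlt2, getD_drop]
            have hwst1 : ws2.getD (t+1) 0 = ws.getD (n + (t - m) + 1) 0 := by
              rw [hws2, getD_append_right (by omega), hlt1, getD_drop,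
                show n + 1 + (t + 1 - (m+1)) = n + (t - m) + 1 by omega]
            have hwst : ws2.getD t 0 = ws.getD (n + (t - m)) 0 := by
              by_cases htm2 : t = m
              · subst htm2
                rw [hws2, getD_append_left (by omega), getD_take _ (by omega)]
                simpa using heq
              · rw [hws2, getD_append_right (by omega), hlt1, getD_drop,
                  show n + 1 + (t - (m+1)) = n + (t - m) by omega]
            rw [hfst, hwst, hwst1]
            exact hends (n + (t - m)) (by omega)
      have hne2 : ws2 ≠ [] :=
        List.ne_nil_of_length_pos (by rw [hlws2]; omega)
      have h02 : ws2.getD 0 0 ∈ A := by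
        rw [hws2, getD_append_left (by omega), getD_take _ (by omega)]; exact h0
      have hlast2 : ws2.getD (ws2.length - 1) 0 ∈ B := by
        rw [hlws2, hws2]
        by_cases hn1 : n + 1 < ws.length
        · rw [getD_append_right (by rw [hlt1]; omega), hlt1, getD_drop,
            show n + 1 + (m + 1 + (ws.length - (n+1)) - 1 - (m+1)) = ws.length - 1 by omega]
          exact hlast
        · have hn2 : n = ws.length - 1 := by omega
          rw [show m + 1 + (ws.length - (n+1)) - 1 = m by omega,
            getD_append_left (by omega), getD_take _ (by omega), heq, hn2]
          exact hlast
      obtain ⟨ws', fs', p1, p2, p3, p4, p5, p6, p7, p8⟩ :=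
        ih ws2 fs2 (by omega) hw2 hne2 h02 hlast2
      refine ⟨ws', fs', p1, p2, p3, p4, p5, p6, fun v hv => ?_, fun e he => ?_⟩
      · rcases List.mem_append.mp (p7 v hv) with h | h
        · exact List.mem_of_mem_take h
        · exact List.mem_of_mem_drop h
      · rcases List.mem_append.mp (p8 e he) with h | h
        · exact List.mem_of_mem_take h
        · exact List.mem_of_mem_drop h
    · push_neg at hcA hcB hcD
      refine ⟨ws, fs, hw, ?_, ?_, h0, hlast, ?_, fun v hv => hv, fun e he => he⟩
      · refine nodup_of_getD_inj fun p q hp hq hpq => ?_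
        rcases lt_trichotomy p q with h | h | h
        · exact absurd hpq (hcD p q h hq)
        · exact h
        · exact absurd hpq.symm (hcD q p h hp)
      · intro h; rw [h] at hlen; simp at hlen; omega
      · intro p hp0 hplt
        exact ⟨hcA p hp0 (by omega), hcB p (by omega)⟩
open Multigraph

theorem wedge {W : Multigraph} {vs es : List ℕ} (hw : IsWalk W vs es) (hnd : vs.Nodup)
    {k : ℕ} (hk0 : 0 < k) (hk : k < vs.length - 1) (hdegk : W.degree (vs.getD k 0) = 2)
    {e : ℕ} (he : e ∈ W.edges) (hke : vs.getD k 0 ∈ W.ends e) :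
    e = es.getD (k-1) 0 ∨ e = es.getD k 0 := by
  by_contra hcon
  push_neg at hcon
  obtain ⟨hne1, hne2⟩ := hcon
  have hlen := hw.1
  have hk1 : k - 1 < es.length := by omega
  have hk2 : k < es.length := by omega
  set v := vs.getD k 0 with hv
  have he1 : es.getD (k-1) 0 ∈ W.edges := hw.2.2.1 _ (getD_mem hk1)
  have he2 : es.getD k 0 ∈ W.edges := hw.2.2.1 _ (getD_mem hk2)
  have hends1 : W.ends (es.getD (k-1) 0) = s(vs.getD (k-1) 0, v) := by
    have := hw.2.2.2 (k-1) hk1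
    rwa [show k - 1 + 1 = k by omega] at this
  have hends2 : W.ends (es.getD k 0) = s(v, vs.getD (k+1) 0) := hw.2.2.2 k hk2
  have hd1 : vs.getD (k-1) 0 ≠ v := fun h => by
    have := nodup_getD_inj hnd (show k-1 < vs.length by omega) (show k < vs.length by omega) h
    omega
  have hd2 : v ≠ vs.getD (k+1) 0 := fun h => by
    have := nodup_getD_inj hnd (show k < vs.length by omega) (show k+1 < vs.length by omega) h
    omega
  have hd3 : vs.getD (k-1) 0 ≠ vs.getD (k+1) 0 := fun h => by
    have := nodup_getD_inj hnd (show k-1 < vs.length by omega) (show k+1 < vs.length by omega) h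
    omega
  have hne12 : es.getD (k-1) 0 ≠ es.getD k 0 := by
    intro h
    rw [h, hends2] at hends1
    rw [Sym2.eq_iff] at hends1
    rcases hends1 with ⟨h1, _⟩ | ⟨_, h2⟩
    · exact hd1 h1.symm
    · exact hd3 h2.symm
  set f : ℕ → ℕ := fun e' => if W.ends e' = s(v, v) then 2 else if v ∈ W.ends e' then 1 else 0
    with hf
  have hfe1 : f (es.getD (k-1) 0) = 1 := by
    rw [hf]
    simp only
    rw [if_neg, if_pos]
    · rw [hends1]; exact Sym2.mem_iff.mpr (Or.inr rfl)
    · rw [hends1]; intro h; rw [Sym2.eq_iff] at h; tauto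
  have hfe2 : f (es.getD k 0) = 1 := by
    rw [hf]
    simp only
    rw [if_neg, if_pos]
    · rw [hends2]; exact Sym2.mem_iff.mpr (Or.inl rfl)
    · rw [hends2]; intro h; rw [Sym2.eq_iff] at h; tauto
  have hfe : 1 ≤ f e := by
    rw [hf]
    simp only [hke, if_true]
    split <;> omega
  have hsub : ({es.getD (k-1) 0, es.getD k 0, e} : Finset ℕ) ⊆ W.edges := by
    intro x hx
    simp only [Finset.mem_insert, Finset.mem_singleton] at hx
    rcases hx with rfl | rfl | rfl
    · exact he1
    · exact he2
    · exact he
  have hsum3 : ∑ x ∈ ({es.getD (k-1) 0, es.getD k 0, e} : Finset ℕ), f x =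
      f (es.getD (k-1) 0) + (f (es.getD k 0) + f e) := by
    rw [Finset.sum_insert (by
        rw [Finset.mem_insert, Finset.mem_singleton]; push_neg
        exact ⟨hne12, Ne.symm hne1⟩),
      Finset.sum_insert (by rw [Finset.mem_singleton]; exact Ne.symm hne2),
      Finset.sum_singleton]
  have hle : ∑ x ∈ ({es.getD (k-1) 0, es.getD k 0, e} : Finset ℕ), f x ≤
      ∑ x ∈ W.edges, f x :=
    Finset.sum_le_sum_of_subset hsub
  have hdeg' : ∑ x ∈ W.edges, f x = 2 := hdegk
  omega

theorem arc_dichotomy {G W : Multigraph} (hW : W.IsSubgraph G) {ws fs : List ℕ}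
    (hwalk : IsWalk G ws fs) (hnd : ws.Nodup) (hne : fs ≠ [])
    (hint : ∀ m, 0 < m → m < ws.length - 1 → ws.getD m 0 ∉ W.verts)
    (hhd : ws.getD 0 0 ∈ W.verts) (hlast : ws.getD (ws.length - 1) 0 ∈ W.verts) :
    (∃ X : Multigraph, X.verts = ws.toFinset ∧ X.edges = fs.toFinset ∧ X.ends = G.ends ∧
      IsWPathList G W X ws fs) ∨
    (∃ e, fs = [e] ∧ e ∈ W.edges ∧
      W.ends e = s(ws.getD 0 0, ws.getD (ws.length - 1) 0)) := by
  have hlen := hwalk.1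
  have hfs0 : 0 < fs.length := List.length_pos_iff.mpr hne
  by_cases hall : ∀ e ∈ fs, e ∉ W.edges
  · left
    refine ⟨⟨ws.toFinset, fs.toFinset, G.ends, ?_⟩, rfl, rfl, rfl, ?_⟩
    · intro e he x hx
      obtain ⟨t, ht, hte⟩ := mem_iff_getD.mp (List.mem_toFinset.mp he)
      rw [← hte, hwalk.2.2.2 t ht] at hx
      rw [List.mem_toFinset]
      rcases Sym2.mem_iff.mp hx with rfl | rfl
      · exact getD_mem (by omega)
      · exact getD_mem (by omega)
    · exact ⟨⟨fun x hx => hwalk.2.1 x (List.mem_toFinset.mp hx),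
        fun e he => hwalk.2.2.1 e (List.mem_toFinset.mp he), fun e _ => rfl⟩,
        ⟨hnd, walk_edges_nodup hwalk hnd, hlen, rfl, rfl, fun t ht => hwalk.2.2.2 t ht⟩,
        hne, hhd, hlast, hint, hall⟩
  · right
    push_neg at hall
    obtain ⟨e, hefs, heW⟩ := hall
    obtain ⟨t, ht, hte⟩ := mem_iff_getD.mp hefs
    have hendsW : W.ends e = G.ends e := hW.2.2 e heW
    have hends : G.ends e = s(ws.getD t 0, ws.getD (t+1) 0) := hte ▸ hwalk.2.2.2 t ht
    have hm1 : ws.getD t 0 ∈ W.verts := by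
      apply W.ends_mem e heW
      rw [hendsW, hends]; exact Sym2.mem_iff.mpr (Or.inl rfl)
    have hm2 : ws.getD (t+1) 0 ∈ W.verts := by
      apply W.ends_mem e heW
      rw [hendsW, hends]; exact Sym2.mem_iff.mpr (Or.inr rfl)
    have ht0 : t = 0 := by
      by_contra h
      exact hint t (by omega) (by omega) hm1
    have ht1 : t + 1 = ws.length - 1 := by
      by_contra h
      exact hint (t+1) (by omega) (by omega) hm2
    have hfs1 : fs.length = 1 := by omega
    obtain ⟨e', he'⟩ := List.length_eq_one_iff.mp hfs1
    have hee : e' = e := by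
      rw [he'] at hte; rw [ht0] at hte; simpa using hte
    exact ⟨e, by rw [he', hee], heW, by rw [hendsW, hends, ht1, ht0]⟩

theorem cycle_prop_rotate {C : Multigraph} {cs es : List ℕ} (hlen : cs.length = es.length)
    (hprop : ∀ t, t < es.length →
      C.ends (es.getD t 0) = s(cs.getD t 0, cs.getD ((t+1) % cs.length) 0))
    {p : ℕ} (hp : p < cs.length) :
    ∀ t, t < (es.rotate p).length →
      C.ends ((es.rotate p).getD t 0) =
        s((cs.rotate p).getD t 0, (cs.rotate p).getD ((t+1) % (cs.rotate p).length) 0) := by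
  intro t ht
  rw [List.length_rotate] at ht
  have hn : 0 < cs.length := by omega
  have e1 : (es.rotate p).getD t 0 = es.getD ((t+p) % cs.length) 0 := by
    rw [getD_rotate es (by omega), hlen]
  have e2 : (cs.rotate p).getD t 0 = cs.getD ((t+p) % cs.length) 0 :=
    getD_rotate cs (by omega)
  have e3 : (cs.rotate p).getD ((t+1) % (cs.rotate p).length) 0 =
      cs.getD (((t+1) % cs.length + p) % cs.length) 0 := by
    rw [List.length_rotate]
    exact getD_rotate cs (Nat.mod_lt _ hn)
  rw [e1, e2, e3, hprop _ (by rw [← hlen]; exact Nat.mod_lt _ hn)]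
  have h1 : ((t+p) % cs.length + 1) % cs.length = (t+p+1) % cs.length :=
    Nat.ModEq.add_right 1 (Nat.mod_modEq (t+p) cs.length)
  have h2 : ((t+1) % cs.length + p) % cs.length = (t+1+p) % cs.length :=
    Nat.ModEq.add_right p (Nat.mod_modEq (t+1) cs.length)
  rw [h1, h2, show t+p+1 = t+1+p by omega]

theorem cycle_arc {G C : Multigraph} (hC : C.IsSubgraph G) {cs es : List ℕ}
    (hlen : cs.length = es.length)
    (hvs : ∀ v ∈ cs, v ∈ C.verts) (hes : ∀ e ∈ es, e ∈ C.edges)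
    (hprop : ∀ t, t < es.length →
      C.ends (es.getD t 0) = s(cs.getD t 0, cs.getD ((t+1) % cs.length) 0))
    {q : ℕ} (hq : q < cs.length) :
    IsWalk G (cs.take (q+1)) (es.take q) := by
  refine ⟨by simp; omega, fun v hv => hC.1 (hvs v (List.mem_of_mem_take hv)),
    fun e he => hC.2.1 (hes e (List.mem_of_mem_take he)), fun t ht => ?_⟩
  rw [List.length_take] at ht
  have ht' : t < q := by omega
  have htn : t + 1 < cs.length := by omega
  rw [getD_take _ ht', getD_take _ (by omega), getD_take _ (by omega)]
  have he : es.getD t 0 ∈ C.edges := hes _ (getD_mem (by omega))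
  rw [← hC.2.2 _ he, hprop t (by omega), Nat.mod_eq_of_lt htn]

theorem cycle_two_arcs {G C : Multigraph} (hC : IsCycleOf G C) {x u : ℕ}
    (hx : x ∈ C.verts) (hu : u ∈ C.verts) (hxu : x ≠ u) :
    ∃ ws₁ fs₁ ws₂ fs₂ : List ℕ, IsWalk G ws₁ fs₁ ∧ IsWalk G ws₂ fs₂ ∧
      ws₁ ≠ [] ∧ ws₂ ≠ [] ∧
      ws₁.getD 0 0 = x ∧ ws₁.getD (ws₁.length - 1) 0 = u ∧
      ws₂.getD 0 0 = u ∧ ws₂.getD (ws₂.length - 1) 0 = x ∧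
      (∀ v ∈ ws₁, v ∈ C.verts) ∧ (∀ v ∈ ws₂, v ∈ C.verts) ∧
      (∀ e ∈ fs₁, e ∈ C.edges) ∧ (∀ e ∈ fs₂, e ∈ C.edges) ∧
      (∀ e, e ∈ fs₁ → e ∈ fs₂ → False) := by
  obtain ⟨hsub, cs, es, hndc, hnde, hne, hlen, hverts, hedges, hprop⟩ := hC
  have hn : 0 < cs.length := by
    rw [hlen]; exact List.length_pos_iff.mpr hne
  obtain ⟨p, hp, hpx⟩ := mem_iff_getD.mp (by rw [hverts] at hx; exact List.mem_toFinset.mp hx)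
  have hlen1 : (cs.rotate p).length = (es.rotate p).length := by simp [hlen]
  have hprop1 := cycle_prop_rotate hlen hprop hp
  have hcs1len : (cs.rotate p).length = cs.length := List.length_rotate cs p
  have hx1 : (cs.rotate p).getD 0 0 = x := by
    rw [getD_rotate cs (by omega), Nat.zero_add, Nat.mod_eq_of_lt hp]; exact hpx
  have hu1 : u ∈ cs.rotate p :=
    List.mem_rotate.mpr (by rw [hverts] at hu; exact List.mem_toFinset.mp hu)
  obtain ⟨q, hq, hqu⟩ := mem_iff_getD.mp hu1
  have hq0 : 0 < q := by
    rcases Nat.eq_zero_or_pos q with h | h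
    · subst h; exact absurd (hqu.symm.trans hx1).symm hxu
    · exact h
  have hqn : q < cs.length := by rwa [hcs1len] at hq
  have hvs1 : ∀ v ∈ cs.rotate p, v ∈ C.verts := fun v hv => by
    rw [hverts]; exact List.mem_toFinset.mpr (List.mem_rotate.mp hv)
  have hes1 : ∀ e ∈ es.rotate p, e ∈ C.edges := fun e he => by
    rw [hedges]; exact List.mem_toFinset.mpr (List.mem_rotate.mp he)
  have hw1 : IsWalk G ((cs.rotate p).take (q+1)) ((es.rotate p).take q) :=
    cycle_arc hsub hlen1 hvs1 hes1 hprop1 hq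
  set r := cs.length - q with hr
  have hr0 : 0 < r := by omega
  have hrn : r < cs.length := by omega
  have hlen2 : ((cs.rotate p).rotate q).length = ((es.rotate p).rotate q).length := by
    simp [hlen]
  have hprop2 := cycle_prop_rotate hlen1 hprop1 hq
  have hvs2 : ∀ v ∈ (cs.rotate p).rotate q, v ∈ C.verts := fun v hv =>
    hvs1 v (List.mem_rotate.mp hv)
  have hes2 : ∀ e ∈ (es.rotate p).rotate q, e ∈ C.edges := fun e he =>
    hes1 e (List.mem_rotate.mp he)
  have hw2 : IsWalk G (((cs.rotate p).rotate q).take (r+1)) (((es.rotate p).rotate q).take r) :=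
    cycle_arc hsub hlen2 hvs2 hes2 hprop2 (by simp [hcs1len]; omega)
  have hl1 : ((cs.rotate p).take (q+1)).length = q + 1 := by
    rw [List.length_take, hcs1len]; omega
  have hl2 : (((cs.rotate p).rotate q).take (r+1)).length = r + 1 := by
    rw [List.length_take, List.length_rotate, hcs1len]; omega
  have h2start : ((cs.rotate p).rotate q).getD 0 0 = u := by
    rw [getD_rotate _ (by rw [hcs1len]; omega), Nat.zero_add,
      Nat.mod_eq_of_lt (by rwa [hcs1len])]
    exact hqu
  have h2end : ((cs.rotate p).rotate q).getD r 0 = x := by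
    rw [getD_rotate _ (by rw [hcs1len]; omega)]
    rw [show r + q = cs.length by omega, hcs1len, Nat.mod_self]
    exact hx1
  refine ⟨(cs.rotate p).take (q+1), (es.rotate p).take q,
    ((cs.rotate p).rotate q).take (r+1), ((es.rotate p).rotate q).take r,
    hw1, hw2,
    List.ne_nil_of_length_pos (by rw [hl1]; omega),
    List.ne_nil_of_length_pos (by rw [hl2]; omega),
    by rw [getD_take _ (by omega)]; exact hx1,
    by rw [hl1, Nat.add_sub_cancel, getD_take _ (by omega)]; exact hqu,
    by rw [getD_take _ (by omega)]; exact h2start,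
    by rw [hl2, Nat.add_sub_cancel, getD_take _ (by omega)]; exact h2end,
    fun v hv => hvs1 v (List.mem_of_mem_take hv),
    fun v hv => hvs2 v (List.mem_of_mem_take hv),
    fun e he => hes1 e (List.mem_of_mem_take he),
    fun e he => hes2 e (List.mem_of_mem_take he),
    ?_⟩
  have hkey : ((es.rotate p).rotate q).take r = (es.rotate p).drop q := by
    rw [List.rotate_eq_drop_append_take (by simp [hlen]; omega)]
    exact List.take_left' (by simp [hlen]; omega)
  have hnd1 : (es.rotate p).Nodup := List.nodup_rotate.mpr hnde
  have hdisj : List.Disjoint ((es.rotate p).take q) ((es.rotate p).drop q) :=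
    List.disjoint_of_nodup_append (by rw [List.take_append_drop]; exact hnd1)
  intro e he1' he2'
  rw [hkey] at he2'
  exact hdisj he1' he2'

open Multigraph in
/-- Lemma on `P_mid`: let `(G,S)` be a rooted graph with `μ(G,S) ≤ 1`, `W` a subgraph of `G`,
and `P` a path of `W` (vertex list `vs`, edge list `es`) all of whose internal vertices have
degree 2 in `W`.  The internal vertices of `P` in `S` occupy exactly the positions between
`i` and `j` (so `P_mid`, the subpath from position `i` to position `j`, is non-empty), its
gates are `a = vs[i]` and `b = vs[j]`, the components of `P − V(P_mid)` containing the
endpoints are `Pv` and `Pw`.  Assume `W − V(P_mid)` contains an S-cycle and `G` has no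
`(W, P_mid, W − V(P_mid))`-path.  Then (1) `{a, b}` separates `P_mid` from `W − V(P_mid)`
in `G`; and (2) every S-cycle `C` of `G` containing a vertex of `P_mid` contains `a` and
`b` and a vertex of each of `Pv` and `Pw`, and if `C` avoids an endpoint of `P`, then `C`
contains a `(W, P_z, W − V(P_z))`-path for the corresponding part `P_z`. -/
theorem gates_separate_and_scycle_through_mid
    (G : Multigraph) (S : Finset ℕ) (hS : S ⊆ G.verts) (hmu : MuLeOne G S)
    (W : Multigraph) (hW : W.IsSubgraph G)
    (vs es : List ℕ) (hwalk : IsWalk W vs es) (hnodup : vs.Nodup)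
    (hdeg : ∀ i, 0 < i → i < vs.length - 1 → W.degree (vs.getD i 0) = 2)
    (i j : ℕ) (hi : 0 < i) (hij : i ≤ j) (hj : j < vs.length - 1)
    (hiS : vs.getD i 0 ∈ S) (hjS : vs.getD j 0 ∈ S)
    (hbetween : ∀ k, 0 < k → k < vs.length - 1 → vs.getD k 0 ∈ S → i ≤ k ∧ k ≤ j)
    (Pmid Pv Pw : Finset ℕ)
    (hPmid : Pmid = ((vs.drop i).take (j - i + 1)).toFinset)
    (hPv : Pv = (vs.take i).toFinset)
    (hPw : Pw = (vs.drop (j + 1)).toFinset)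
    (a b : ℕ) (ha : a = vs.getD i 0) (hb : b = vs.getD j 0)
    (hcyc : ∃ C, IsSCycle (W.deleteVerts Pmid) S C)
    (hnopath : ¬ ∃ X, IsWPathBtw G W X Pmid (W.verts \ Pmid)) :
    Separates G {a, b} Pmid (W.verts \ Pmid) ∧
    ∀ C, IsSCycle G S C → (C.verts ∩ Pmid).Nonempty →
      a ∈ C.verts ∧ b ∈ C.verts ∧
      (C.verts ∩ Pv).Nonempty ∧ (C.verts ∩ Pw).Nonempty ∧
      (vs.getD 0 0 ∉ C.verts →
        ∃ X, X.IsSubgraph C ∧ IsWPathBtw G W X Pv (W.verts \ Pv)) ∧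
      (vs.getD (vs.length - 1) 0 ∉ C.verts →
        ∃ X, X.IsSubgraph C ∧ IsWPathBtw G W X Pw (W.verts \ Pw)) := by
  have hlen : vs.length = es.length + 1 := hwalk.1
  have hvsW : ∀ k, k < vs.length → vs.getD k 0 ∈ W.verts := fun k hk =>
    hwalk.2.1 _ (getD_mem hk)
  have hPmid_elem : ∀ k, i ≤ k → k ≤ j → vs.getD k 0 ∈ Pmid := by
    intro k hik hkj
    rw [hPmid, List.mem_toFinset, mem_iff_getD]
    refine ⟨k - i, ?_, ?_⟩
    · rw [List.length_take, List.length_drop]; omega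
    · rw [getD_take _ (by omega), getD_drop, show i + (k - i) = k by omega]
  have hPmid_rep : ∀ y ∈ Pmid, ∃ k, i ≤ k ∧ k ≤ j ∧ vs.getD k 0 = y := by
    intro y hy
    rw [hPmid, List.mem_toFinset, mem_iff_getD] at hy
    obtain ⟨t, ht, hty⟩ := hy
    rw [List.length_take, List.length_drop] at ht
    rw [getD_take _ (by omega), getD_drop] at hty
    exact ⟨i + t, by omega, by omega, hty⟩
  have hPv_elem : ∀ k, k < i → vs.getD k 0 ∈ Pv := by
    intro k hk
    rw [hPv, List.mem_toFinset, mem_iff_getD]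
    exact ⟨k, by rw [List.length_take]; omega, by rw [getD_take _ hk]⟩
  have hPv_rep : ∀ y ∈ Pv, ∃ k, k < i ∧ vs.getD k 0 = y := by
    intro y hy
    rw [hPv, List.mem_toFinset, mem_iff_getD] at hy
    obtain ⟨t, ht, hty⟩ := hy
    rw [List.length_take] at ht
    rw [getD_take _ (by omega)] at hty
    exact ⟨t, by omega, hty⟩
  have hPw_elem : ∀ k, j + 1 ≤ k → k < vs.length → vs.getD k 0 ∈ Pw := by
    intro k h1 h2
    rw [hPw, List.mem_toFinset, mem_iff_getD]
    exact ⟨k - (j+1), by rw [List.length_drop]; omega,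
      by rw [getD_drop, show j+1+(k-(j+1)) = k by omega]⟩
  have hPw_rep : ∀ y ∈ Pw, ∃ k, j + 1 ≤ k ∧ k < vs.length ∧ vs.getD k 0 = y := by
    intro y hy
    rw [hPw, List.mem_toFinset, mem_iff_getD] at hy
    obtain ⟨t, ht, hty⟩ := hy
    rw [List.length_drop] at ht
    rw [getD_drop] at hty
    exact ⟨j+1+t, by omega, by omega, hty⟩
  have hnotPv : ∀ k, k < vs.length → i ≤ k → vs.getD k 0 ∉ Pv := by
    intro k hk hik hmem
    obtain ⟨k', h1, h3⟩ := hPv_rep _ hmem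
    have := nodup_getD_inj hnodup (by omega) hk h3
    omega
  have hnotPw : ∀ k, k ≤ j → vs.getD k 0 ∉ Pw := by
    intro k hk hmem
    obtain ⟨k', h1, h2, h3⟩ := hPw_rep _ hmem
    have := nodup_getD_inj hnodup (by omega) (by omega) h3
    omega
  have hPmidW : Pmid ⊆ W.verts := by
    intro y hy
    obtain ⟨k, h1, h2, h3⟩ := hPmid_rep y hy
    exact h3 ▸ hvsW k (by omega)
  have exit_Pmid : ∀ e ∈ W.edges, ∀ y z : ℕ, W.ends e = s(y, z) → y ∈ Pmid → z ∉ Pmid →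
      (e = es.getD (i-1) 0 ∧ y = a ∧ z = vs.getD (i-1) 0) ∨
      (e = es.getD j 0 ∧ y = b ∧ z = vs.getD (j+1) 0) := by
    intro e he y z hends hy hz
    obtain ⟨k, hik, hkj, hky⟩ := hPmid_rep y hy
    have hk0 : 0 < k := by omega
    have hklt : k < vs.length - 1 := by omega
    have hkmem : vs.getD k 0 ∈ W.ends e := by
      rw [hends, hky]; exact Sym2.mem_iff.mpr (Or.inl rfl)
    rcases wedge hwalk hnodup hk0 hklt (hdeg k hk0 hklt) he hkmem with hcase | hcase
    · have hE : s(y, z) = s(vs.getD (k-1) 0, vs.getD k 0) := by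
        rw [← hends, hcase]
        have h := hwalk.2.2.2 (k-1) (by omega)
        rwa [show k-1+1 = k by omega] at h
      rw [Sym2.eq_iff] at hE
      have hzeq : z = vs.getD (k-1) 0 := by
        rcases hE with ⟨h1, _⟩ | ⟨_, h2⟩
        · exfalso; have := nodup_getD_inj hnodup (by omega) (by omega) (hky.trans h1); omega
        · exact h2
      have hki : k = i := by
        by_contra hne'
        exact hz (hzeq ▸ hPmid_elem (k-1) (by omega) (by omega))
      left
      exact ⟨by rw [hcase, hki], by rw [← hky, hki, ha], by rw [hzeq, hki]⟩
    · have hE : s(y, z) = s(vs.getD k 0, vs.getD (k+1) 0) := by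
        rw [← hends, hcase]; exact hwalk.2.2.2 k (by omega)
      rw [Sym2.eq_iff] at hE
      have hzeq : z = vs.getD (k+1) 0 := by
        rcases hE with ⟨_, h2⟩ | ⟨h1, _⟩
        · exact h2
        · exfalso; have := nodup_getD_inj hnodup (by omega) (by omega) (hky.trans h1); omega
      have hkj' : k = j := by
        by_contra hne'
        exact hz (hzeq ▸ hPmid_elem (k+1) (by omega) (by omega))
      right
      exact ⟨by rw [hcase, hkj'], by rw [← hky, hkj', hb], by rw [hzeq, hkj']⟩
  have exit_Pv : ∀ e ∈ W.edges, ∀ y z : ℕ, W.ends e = s(y, z) → y ∈ Pv → z ∉ Pv →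
      y ≠ vs.getD 0 0 → e = es.getD (i-1) 0 ∧ y = vs.getD (i-1) 0 ∧ z = a := by
    intro e he y z hends hy hz hy0
    obtain ⟨k, hki, hky⟩ := hPv_rep y hy
    have hk0 : 0 < k := by
      rcases Nat.eq_zero_or_pos k with h | h
      · exact absurd (by rw [← hky, h]) hy0
      · exact h
    have hklt : k < vs.length - 1 := by omega
    have hkmem : vs.getD k 0 ∈ W.ends e := by
      rw [hends, hky]; exact Sym2.mem_iff.mpr (Or.inl rfl)
    rcases wedge hwalk hnodup hk0 hklt (hdeg k hk0 hklt) he hkmem with hcase | hcase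
    · exfalso
      have hE : s(y, z) = s(vs.getD (k-1) 0, vs.getD k 0) := by
        rw [← hends, hcase]
        have h := hwalk.2.2.2 (k-1) (by omega)
        rwa [show k-1+1 = k by omega] at h
      rw [Sym2.eq_iff] at hE
      have hzeq : z = vs.getD (k-1) 0 := by
        rcases hE with ⟨h1, _⟩ | ⟨_, h2⟩
        · exfalso; have := nodup_getD_inj hnodup (by omega) (by omega) (hky.trans h1); omega
        · exact h2
      exact hz (hzeq ▸ hPv_elem (k-1) (by omega))
    · have hE : s(y, z) = s(vs.getD k 0, vs.getD (k+1) 0) := by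
        rw [← hends, hcase]; exact hwalk.2.2.2 k (by omega)
      rw [Sym2.eq_iff] at hE
      have hzeq : z = vs.getD (k+1) 0 := by
        rcases hE with ⟨_, h2⟩ | ⟨h1, _⟩
        · exact h2
        · exfalso; have := nodup_getD_inj hnodup (by omega) (by omega) (hky.trans h1); omega
      have hki' : k = i - 1 := by
        by_contra hne'
        exact hz (hzeq ▸ hPv_elem (k+1) (by omega))
      exact ⟨by rw [hcase, hki'], by rw [← hky, hki'],
        by rw [hzeq, show k+1 = i by omega, ha]⟩
  have exit_Pw : ∀ e ∈ W.edges, ∀ y z : ℕ, W.ends e = s(y, z) → y ∈ Pw → z ∉ Pw →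
      y ≠ vs.getD (vs.length - 1) 0 → e = es.getD j 0 ∧ y = vs.getD (j+1) 0 ∧ z = b := by
    intro e he y z hends hy hz hylast
    obtain ⟨k, hjk, hkl, hky⟩ := hPw_rep y hy
    have hkne : k ≠ vs.length - 1 := fun h => hylast (by rw [← hky, h])
    have hklt : k < vs.length - 1 := by omega
    have hk0 : 0 < k := by omega
    have hkmem : vs.getD k 0 ∈ W.ends e := by
      rw [hends, hky]; exact Sym2.mem_iff.mpr (Or.inl rfl)
    rcases wedge hwalk hnodup hk0 hklt (hdeg k hk0 hklt) he hkmem with hcase | hcase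
    · have hE : s(y, z) = s(vs.getD (k-1) 0, vs.getD k 0) := by
        rw [← hends, hcase]
        have h := hwalk.2.2.2 (k-1) (by omega)
        rwa [show k-1+1 = k by omega] at h
      rw [Sym2.eq_iff] at hE
      have hzeq : z = vs.getD (k-1) 0 := by
        rcases hE with ⟨h1, _⟩ | ⟨_, h2⟩
        · exfalso; have := nodup_getD_inj hnodup (by omega) (by omega) (hky.trans h1); omega
        · exact h2
      have hkj1 : k = j + 1 := by
        by_contra hne'
        exact hz (hzeq ▸ hPw_elem (k-1) (by omega) (by omega))
      exact ⟨by rw [hcase, show k-1 = j by omega], by rw [← hky, hkj1],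
        by rw [hzeq, show k-1 = j by omega, hb]⟩
    · exfalso
      have hE : s(y, z) = s(vs.getD k 0, vs.getD (k+1) 0) := by
        rw [← hends, hcase]; exact hwalk.2.2.2 k (by omega)
      rw [Sym2.eq_iff] at hE
      have hzeq : z = vs.getD (k+1) 0 := by
        rcases hE with ⟨_, h2⟩ | ⟨h1, _⟩
        · exact h2
        · exfalso; have := nodup_getD_inj hnodup (by omega) (by omega) (hky.trans h1); omega
      exact hz (hzeq ▸ hPw_elem (k+1) (by omega) (by omega))
  have hdisjPmid : Disjoint Pmid (W.verts \ Pmid) := Finset.disjoint_sdiff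
  have hsep : Separates G {a, b} Pmid (W.verts \ Pmid) := by
    rintro ⟨ws, fs, hwd, hnew, h0, hlastw⟩
    have hwG : IsWalk G ws fs := isWalk_of_subgraph hwd (deleteVerts_isSubgraph G {a,b})
    have havoid : ∀ v ∈ ws, v ≠ a ∧ v ≠ b := by
      intro v hv
      have hvv : v ∈ G.verts \ ({a, b} : Finset ℕ) := hwd.2.1 v hv
      rw [Finset.mem_sdiff, Finset.mem_insert, Finset.mem_singleton] at hvv
      exact ⟨fun h => hvv.2 (Or.inl h), fun h => hvv.2 (Or.inr h)⟩
    obtain ⟨ws', fs', p1, p2, p3, p4, p5, p6, p7, p8⟩ :=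
      walk_refine G Pmid (W.verts \ Pmid) hdisjPmid ws.length ws fs le_rfl hwG hnew h0 hlastw
    have hlen' := p1.1
    have hpos' : 0 < fs'.length := List.length_pos_iff.mpr p3
    have hint : ∀ m, 0 < m → m < ws'.length - 1 → ws'.getD m 0 ∉ W.verts := by
      intro m hm1 hm2 hmem
      exact (p6 m hm1 hm2).2 (Finset.mem_sdiff.mpr ⟨hmem, (p6 m hm1 hm2).1⟩)
    rcases arc_dichotomy hW p1 p2 p3 hint (hPmidW p4) (Finset.mem_sdiff.mp p5).1 with
      ⟨X, hXv, hXe, hXends, hXpath⟩ | ⟨e, hfse, heW, hends⟩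
    · exact hnopath ⟨X, ws', fs', hXpath, Or.inl ⟨p4, p5⟩⟩
    · rcases exit_Pmid e heW _ _ hends p4 (Finset.mem_sdiff.mp p5).2 with
        ⟨_, hya, _⟩ | ⟨_, hyb, _⟩
      · exact (havoid _ (p7 _ (getD_mem (by omega)))).1 hya
      · exact (havoid _ (p7 _ (getD_mem (by omega)))).2 hyb
  refine ⟨hsep, fun C hCS hCP => ?_⟩
  obtain ⟨x, hxmem⟩ := hCP
  rw [Finset.mem_inter] at hxmem
  obtain ⟨C₀, hC₀⟩ := hcyc
  have hC₀G : IsSCycle G S C₀ :=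
    isSCycle_of_subgraph hC₀ (isSubgraph_trans (deleteVerts_isSubgraph W Pmid) hW)
  have hndis := hmu C C₀ hCS hC₀G
  rw [Finset.not_disjoint_iff] at hndis
  obtain ⟨u, huC, huC₀⟩ := hndis
  have huWv : u ∈ W.verts \ Pmid := hC₀.1.1.1 huC₀
  have hxu : x ≠ u := fun h => (Finset.mem_sdiff.mp huWv).2 (h ▸ hxmem.2)
  obtain ⟨ws₁, fs₁, ws₂, fs₂, hw1, hw2, hne1, hne2, hs1, hl1, hs2, hl2, hv1, hv2, hE1, hE2,
    hdisjE⟩ := cycle_two_arcs hCS.1 hxmem.1 huC hxu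
  obtain ⟨as₁, af₁, q1, q2, q3, q4, q5, q6, q7, q8⟩ :=
    walk_refine G Pmid (W.verts \ Pmid) hdisjPmid ws₁.length ws₁ fs₁ le_rfl hw1 hne1
      (by rw [hs1]; exact hxmem.2) (by rw [hl1]; exact huWv)
  obtain ⟨as₂, af₂, r1, r2, r3, r4, r5, r6, r7, r8⟩ :=
    walk_refine G (W.verts \ Pmid) Pmid hdisjPmid.symm ws₂.length ws₂ fs₂ le_rfl hw2 hne2
      (by rw [hs2]; exact huWv) (by rw [hl2]; exact hxmem.2)
  have q1len := q1.1
  have q3pos : 0 < af₁.length := List.length_pos_iff.mpr q3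
  have r1len := r1.1
  have r3pos : 0 < af₂.length := List.length_pos_iff.mpr r3
  have hint₁ : ∀ m, 0 < m → m < as₁.length - 1 → as₁.getD m 0 ∉ W.verts := fun m h1 h2 hmem =>
    (q6 m h1 h2).2 (Finset.mem_sdiff.mpr ⟨hmem, (q6 m h1 h2).1⟩)
  have hint₂ : ∀ m, 0 < m → m < as₂.length - 1 → as₂.getD m 0 ∉ W.verts := fun m h1 h2 hmem =>
    (r6 m h1 h2).1 (Finset.mem_sdiff.mpr ⟨hmem, (r6 m h1 h2).2⟩)
  have hC1mem : ∀ v ∈ as₁, v ∈ C.verts := fun v hv => hv1 v (q7 v hv)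
  have hC2mem : ∀ v ∈ as₂, v ∈ C.verts := fun v hv => hv2 v (r7 v hv)
  rcases arc_dichotomy hW q1 q2 q3 hint₁ (hPmidW q4) (Finset.mem_sdiff.mp q5).1 with
    ⟨X, _, _, _, hXpath⟩ | ⟨e₁, hfe₁, heW₁, hends₁⟩
  · exact absurd ⟨X, as₁, af₁, hXpath, Or.inl ⟨q4, q5⟩⟩ hnopath
  rcases arc_dichotomy hW r1 r2 r3 hint₂ (Finset.mem_sdiff.mp r4).1 (hPmidW r5) with
    ⟨X, _, _, _, hXpath⟩ | ⟨e₂, hfe₂, heW₂, hends₂⟩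
  · exact absurd ⟨X, as₂, af₂, hXpath, Or.inr ⟨r4, r5⟩⟩ hnopath
  have hne_e : e₁ ≠ e₂ := by
    intro h
    exact hdisjE e₁ (q8 _ (by rw [hfe₁]; exact List.mem_singleton.mpr rfl))
      (by rw [h]; exact r8 _ (by rw [hfe₂]; exact List.mem_singleton.mpr rfl))
  have hd₁ : as₁.getD 0 0 ∈ C.verts := hC1mem _ (getD_mem (by omega))
  have hl₁ : as₁.getD (as₁.length - 1) 0 ∈ C.verts := hC1mem _ (getD_mem (by omega))
  have hd₂ : as₂.getD 0 0 ∈ C.verts := hC2mem _ (getD_mem (by omega))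
  have hl₂m : as₂.getD (as₂.length - 1) 0 ∈ C.verts := hC2mem _ (getD_mem (by omega))
  have hc₁ := exit_Pmid e₁ heW₁ _ _ hends₁ q4 (Finset.mem_sdiff.mp q5).2
  have hc₂ := exit_Pmid e₂ heW₂ _ _ (by rw [hends₂]; exact Sym2.eq_swap) r5
    (Finset.mem_sdiff.mp r4).2
  have hkey : a ∈ C.verts ∧ b ∈ C.verts ∧ vs.getD (i-1) 0 ∈ C.verts ∧
      vs.getD (j+1) 0 ∈ C.verts := by
    rcases hc₁ with ⟨hE1', hy1, hz1⟩ | ⟨hE1', hy1, hz1⟩ <;>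
      rcases hc₂ with ⟨hE2', hy2, hz2⟩ | ⟨hE2', hy2, hz2⟩
    · exact absurd (hE1'.trans hE2'.symm) hne_e
    · exact ⟨hy1 ▸ hd₁, hy2 ▸ hl₂m, hz1 ▸ hl₁, hz2 ▸ hd₂⟩
    · exact ⟨hy2 ▸ hl₂m, hy1 ▸ hd₁, hz2 ▸ hd₂, hz1 ▸ hl₁⟩
    · exact absurd (hE1'.trans hE2'.symm) hne_e
  have haC := hkey.1
  have hbC := hkey.2.1
  have hviC := hkey.2.2.1
  have hvjC := hkey.2.2.2
  have hvinPv : vs.getD (i-1) 0 ∈ Pv := hPv_elem (i-1) (by omega)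
  have hvjnPw : vs.getD (j+1) 0 ∈ Pw := hPw_elem (j+1) (by omega) (by omega)
  have hdisjPv : Disjoint Pv (W.verts \ Pv) := Finset.disjoint_sdiff
  have hdisjPw : Disjoint Pw (W.verts \ Pw) := Finset.disjoint_sdiff
  have hPvW : Pv ⊆ W.verts := by
    intro y hy
    obtain ⟨k, h1, h2⟩ := hPv_rep y hy
    exact h2 ▸ hvsW k (by omega)
  have hPwW : Pw ⊆ W.verts := by
    intro y hy
    obtain ⟨k, h1, h2, h3⟩ := hPw_rep y hy
    exact h3 ▸ hvsW k (by omega)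
  have hPvpart : vs.getD 0 0 ∉ C.verts →
      ∃ X, X.IsSubgraph C ∧ IsWPathBtw G W X Pv (W.verts \ Pv) := by
    intro hv0
    have haWPv : a ∈ W.verts \ Pv := Finset.mem_sdiff.mpr
      ⟨ha ▸ hvsW i (by omega), ha ▸ hnotPv i (by omega) (le_refl i)⟩
    have hx'a : vs.getD (i-1) 0 ≠ a := by
      intro h
      rw [ha] at h
      have := nodup_getD_inj hnodup (by omega) (by omega) h
      omega
    obtain ⟨cs₁, cf₁, cs₂, cf₂, hw1', hw2', hne1', hne2', hs1', hl1', hs2', hl2', hv1', hv2',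
      hcE1, hcE2, hdisjE'⟩ := cycle_two_arcs hCS.1 hviC haC hx'a
    obtain ⟨bs₁, bf₁, t1, t2, t3, t4, t5, t6, t7, t8⟩ :=
      walk_refine G Pv (W.verts \ Pv) hdisjPv cs₁.length cs₁ cf₁ le_rfl hw1' hne1'
        (by rw [hs1']; exact hvinPv) (by rw [hl1']; exact haWPv)
    obtain ⟨bs₂, bf₂, u1, u2, u3, u4, u5, u6, u7, u8⟩ :=
      walk_refine G (W.verts \ Pv) Pv hdisjPv.symm cs₂.length cs₂ cf₂ le_rfl hw2' hne2'
        (by rw [hs2']; exact haWPv) (by rw [hl2']; exact hvinPv)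
    have t1len := t1.1
    have t3pos : 0 < bf₁.length := List.length_pos_iff.mpr t3
    have u1len := u1.1
    have u3pos : 0 < bf₂.length := List.length_pos_iff.mpr u3
    have hintt : ∀ m, 0 < m → m < bs₁.length - 1 → bs₁.getD m 0 ∉ W.verts := fun m h1 h2 hmem =>
      (t6 m h1 h2).2 (Finset.mem_sdiff.mpr ⟨hmem, (t6 m h1 h2).1⟩)
    have hintu : ∀ m, 0 < m → m < bs₂.length - 1 → bs₂.getD m 0 ∉ W.verts := fun m h1 h2 hmem =>
      (u6 m h1 h2).1 (Finset.mem_sdiff.mpr ⟨hmem, (u6 m h1 h2).2⟩)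
    have hCb1 : ∀ v ∈ bs₁, v ∈ C.verts := fun v hv => hv1' v (t7 v hv)
    have hCb2 : ∀ v ∈ bs₂, v ∈ C.verts := fun v hv => hv2' v (u7 v hv)
    rcases arc_dichotomy hW t1 t2 t3 hintt (hPvW t4) (Finset.mem_sdiff.mp t5).1 with
      ⟨X, hXv, hXe, hXends, hXpath⟩ | ⟨e₁', hfe₁', heW₁', hends₁'⟩
    · refine ⟨X, ⟨?_, ?_, ?_⟩, bs₁, bf₁, hXpath, Or.inl ⟨t4, t5⟩⟩
      · intro y hy
        rw [hXv, List.mem_toFinset] at hy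
        exact hCb1 y hy
      · intro e he
        rw [hXe, List.mem_toFinset] at he
        exact hcE1 e (t8 e he)
      · intro e he
        rw [hXe, List.mem_toFinset] at he
        rw [hXends]
        exact (hCS.1.1.2.2 e (hcE1 e (t8 e he))).symm
    rcases arc_dichotomy hW u1 u2 u3 hintu (Finset.mem_sdiff.mp u4).1 (hPvW u5) with
      ⟨X, hXv, hXe, hXends, hXpath⟩ | ⟨e₂', hfe₂', heW₂', hends₂'⟩
    · refine ⟨X, ⟨?_, ?_, ?_⟩, bs₂, bf₂, hXpath, Or.inr ⟨u4, u5⟩⟩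
      · intro y hy
        rw [hXv, List.mem_toFinset] at hy
        exact hCb2 y hy
      · intro e he
        rw [hXe, List.mem_toFinset] at he
        exact hcE2 e (u8 e he)
      · intro e he
        rw [hXe, List.mem_toFinset] at he
        rw [hXends]
        exact (hCS.1.1.2.2 e (hcE2 e (u8 e he))).symm
    exfalso
    have hy1ne : bs₁.getD 0 0 ≠ vs.getD 0 0 := by
      intro h
      exact hv0 (h ▸ hCb1 _ (getD_mem (by omega)))
    have hy2ne : bs₂.getD (bs₂.length - 1) 0 ≠ vs.getD 0 0 := by
      intro h
      exact hv0 (h ▸ hCb2 _ (getD_mem (by omega)))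
    obtain ⟨he1eq, _, _⟩ := exit_Pv e₁' heW₁' _ _ hends₁' t4 (Finset.mem_sdiff.mp t5).2 hy1ne
    obtain ⟨he2eq, _, _⟩ := exit_Pv e₂' heW₂' _ _ (by rw [hends₂']; exact Sym2.eq_swap) u5
      (Finset.mem_sdiff.mp u4).2 hy2ne
    exact hdisjE' e₁' (t8 _ (by rw [hfe₁']; exact List.mem_singleton.mpr rfl))
      (by rw [he1eq, ← he2eq]; exact u8 _ (by rw [hfe₂']; exact List.mem_singleton.mpr rfl))
  have hPwpart : vs.getD (vs.length - 1) 0 ∉ C.verts →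
      ∃ X, X.IsSubgraph C ∧ IsWPathBtw G W X Pw (W.verts \ Pw) := by
    intro hvl
    have hbWPw : b ∈ W.verts \ Pw := Finset.mem_sdiff.mpr
      ⟨hb ▸ hvsW j (by omega), hb ▸ hnotPw j (le_refl j)⟩
    have hx'b : vs.getD (j+1) 0 ≠ b := by
      intro h
      rw [hb] at h
      have := nodup_getD_inj hnodup (by omega) (by omega) h
      omega
    obtain ⟨cs₁, cf₁, cs₂, cf₂, hw1', hw2', hne1', hne2', hs1', hl1', hs2', hl2', hv1', hv2',
      hcE1, hcE2, hdisjE'⟩ := cycle_two_arcs hCS.1 hvjC hbC hx'b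
    obtain ⟨bs₁, bf₁, t1, t2, t3, t4, t5, t6, t7, t8⟩ :=
      walk_refine G Pw (W.verts \ Pw) hdisjPw cs₁.length cs₁ cf₁ le_rfl hw1' hne1'
        (by rw [hs1']; exact hvjnPw) (by rw [hl1']; exact hbWPw)
    obtain ⟨bs₂, bf₂, u1, u2, u3, u4, u5, u6, u7, u8⟩ :=
      walk_refine G (W.verts \ Pw) Pw hdisjPw.symm cs₂.length cs₂ cf₂ le_rfl hw2' hne2'
        (by rw [hs2']; exact hbWPw) (by rw [hl2']; exact hvjnPw)
    have t1len := t1.1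
    have t3pos : 0 < bf₁.length := List.length_pos_iff.mpr t3
    have u1len := u1.1
    have u3pos : 0 < bf₂.length := List.length_pos_iff.mpr u3
    have hintt : ∀ m, 0 < m → m < bs₁.length - 1 → bs₁.getD m 0 ∉ W.verts := fun m h1 h2 hmem =>
      (t6 m h1 h2).2 (Finset.mem_sdiff.mpr ⟨hmem, (t6 m h1 h2).1⟩)
    have hintu : ∀ m, 0 < m → m < bs₂.length - 1 → bs₂.getD m 0 ∉ W.verts := fun m h1 h2 hmem =>
      (u6 m h1 h2).1 (Finset.mem_sdiff.mpr ⟨hmem, (u6 m h1 h2).2⟩)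
    have hCb1 : ∀ v ∈ bs₁, v ∈ C.verts := fun v hv => hv1' v (t7 v hv)
    have hCb2 : ∀ v ∈ bs₂, v ∈ C.verts := fun v hv => hv2' v (u7 v hv)
    rcases arc_dichotomy hW t1 t2 t3 hintt (hPwW t4) (Finset.mem_sdiff.mp t5).1 with
      ⟨X, hXv, hXe, hXends, hXpath⟩ | ⟨e₁', hfe₁', heW₁', hends₁'⟩
    · refine ⟨X, ⟨?_, ?_, ?_⟩, bs₁, bf₁, hXpath, Or.inl ⟨t4, t5⟩⟩
      · intro y hy
        rw [hXv, List.mem_toFinset] at hy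
        exact hCb1 y hy
      · intro e he
        rw [hXe, List.mem_toFinset] at he
        exact hcE1 e (t8 e he)
      · intro e he
        rw [hXe, List.mem_toFinset] at he
        rw [hXends]
        exact (hCS.1.1.2.2 e (hcE1 e (t8 e he))).symm
    rcases arc_dichotomy hW u1 u2 u3 hintu (Finset.mem_sdiff.mp u4).1 (hPwW u5) with
      ⟨X, hXv, hXe, hXends, hXpath⟩ | ⟨e₂', hfe₂', heW₂', hends₂'⟩
    · refine ⟨X, ⟨?_, ?_, ?_⟩, bs₂, bf₂, hXpath, Or.inr ⟨u4, u5⟩⟩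
      · intro y hy
        rw [hXv, List.mem_toFinset] at hy
        exact hCb2 y hy
      · intro e he
        rw [hXe, List.mem_toFinset] at he
        exact hcE2 e (u8 e he)
      · intro e he
        rw [hXe, List.mem_toFinset] at he
        rw [hXends]
        exact (hCS.1.1.2.2 e (hcE2 e (u8 e he))).symm
    exfalso
    have hy1ne : bs₁.getD 0 0 ≠ vs.getD (vs.length - 1) 0 := by
      intro h
      exact hvl (h ▸ hCb1 _ (getD_mem (by omega)))
    have hy2ne : bs₂.getD (bs₂.length - 1) 0 ≠ vs.getD (vs.length - 1) 0 := by
      intro h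
      exact hvl (h ▸ hCb2 _ (getD_mem (by omega)))
    obtain ⟨he1eq, _, _⟩ := exit_Pw e₁' heW₁' _ _ hends₁' t4 (Finset.mem_sdiff.mp t5).2 hy1ne
    obtain ⟨he2eq, _, _⟩ := exit_Pw e₂' heW₂' _ _ (by rw [hends₂']; exact Sym2.eq_swap) u5
      (Finset.mem_sdiff.mp u4).2 hy2ne
    exact hdisjE' e₁' (t8 _ (by rw [hfe₁']; exact List.mem_singleton.mpr rfl))
      (by rw [he1eq, ← he2eq]; exact u8 _ (by rw [hfe₂']; exact List.mem_singleton.mpr rfl))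
  exact ⟨haC, hbC, ⟨_, Finset.mem_inter.mpr ⟨hviC, hvinPv⟩⟩,
    ⟨_, Finset.mem_inter.mpr ⟨hvjC, hvjnPw⟩⟩, hPvpart, hPwpart⟩
end

section
/- Let (G, S) be a rooted graph such that G contains an S-cycle subgraph W. Let C be a cycle of W, let v, w ∈ V(C), and let P be a W-path whose endpoints are v and w. Suppose that, denoting by C1 and C2 the two cycles of C ∪ P other than C, the subgraph W contains two cycles C1' and C2' such that Ci is vertex-disjoint from Ci' for each i ∈ {1, 2}. Then G has two vertex-disjoint S-cycles. -/
open scoped Classical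

namespace ListAux

lemma getD_append_lt (l l' : List ℕ) (i : ℕ) (h : i < l.length) :
    (l ++ l').getD i 0 = l.getD i 0 := by
  rw [List.getD_eq_getElem _ _ (by simp; omega), List.getD_eq_getElem _ _ h,
    List.getElem_append_left]

lemma getD_append_ge (l l' : List ℕ) (i : ℕ) (h : l.length ≤ i) (h2 : i < l.length + l'.length) :
    (l ++ l').getD i 0 = l'.getD (i - l.length) 0 := by
  rw [List.getD_eq_getElem _ _ (by simp; omega), List.getD_eq_getElem _ _ (by omega),
    List.getElem_append_right h]

lemma getD_take (l : List ℕ) (k i : ℕ) (h : i < k) (h2 : i < l.length) :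
    (l.take k).getD i 0 = l.getD i 0 := by
  rw [List.getD_eq_getElem _ _ (by simp; omega), List.getD_eq_getElem _ _ h2, List.getElem_take]

lemma getD_drop (l : List ℕ) (k i : ℕ) (h : k + i < l.length) :
    (l.drop k).getD i 0 = l.getD (k + i) 0 := by
  rw [List.getD_eq_getElem _ _ (by simp; omega), List.getD_eq_getElem _ _ h, List.getElem_drop]

lemma getD_reverse (l : List ℕ) (i : ℕ) (h : i < l.length) :
    l.reverse.getD i 0 = l.getD (l.length - 1 - i) 0 := by
  rw [List.getD_eq_getElem _ _ (by simp; omega), List.getD_eq_getElem _ _ (by omega),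
    List.getElem_reverse]

lemma getD_dropLast (l : List ℕ) (i : ℕ) (h : i < l.length - 1) :
    l.dropLast.getD i 0 = l.getD i 0 := by
  rw [List.getD_eq_getElem _ _ (by simp; omega), List.getD_eq_getElem _ _ (by omega),
    List.getElem_dropLast]

lemma getD_mem (l : List ℕ) (i : ℕ) (h : i < l.length) : l.getD i 0 ∈ l := by
  rw [List.getD_eq_getElem _ _ h]; exact List.getElem_mem h

lemma getD_rotate (l : List ℕ) (j i : ℕ) (h : i < l.length) :
    (l.rotate j).getD i 0 = l.getD ((i + j) % l.length) 0 := by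
  rw [List.getD_eq_getElem _ _ (by simp; omega),
    List.getD_eq_getElem _ _ (Nat.mod_lt _ (by omega)), List.getElem_rotate]

end ListAux

namespace Multigraph

open ListAux

lemma IsSubgraph.trans {A B C : Multigraph} (h1 : A.IsSubgraph B) (h2 : B.IsSubgraph C) :
    A.IsSubgraph C :=
  ⟨h1.1.trans h2.1, h1.2.1.trans h2.2.1,
    fun e he => (h1.2.2 e he).trans (h2.2.2 e (h1.2.1 he))⟩

lemma IsCycleOf.trans {G H X : Multigraph} (h : IsCycleOf H X) (hHG : H.IsSubgraph G) :
    IsCycleOf G X := ⟨h.1.trans hHG, h.2⟩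

/-- Build a cycle-candidate subgraph from a vertex list and an edge list. -/
noncomputable def ofLists (G : Multigraph) (L E : List ℕ)
    (hlen : L.length = E.length)
    (hE : ∀ e ∈ E, e ∈ G.edges)
    (h : ∀ i, i < E.length →
      G.ends (E.getD i 0) = s(L.getD i 0, L.getD ((i + 1) % L.length) 0)) :
    Multigraph where
  verts := L.toFinset
  edges := E.toFinset
  ends := G.ends
  ends_mem := by
    intro e he x hx
    rw [List.mem_toFinset] at he
    rw [List.mem_toFinset]
    obtain ⟨i, hi, rfl⟩ := List.mem_iff_getElem.mp he
    rw [← List.getD_eq_getElem E 0 hi, h i hi] at hx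
    have h1 : L.getD i 0 ∈ L := getD_mem L i (by omega)
    have h2 : L.getD ((i + 1) % L.length) 0 ∈ L :=
      getD_mem L _ (Nat.mod_lt _ (by omega))
    rcases Sym2.mem_iff.mp hx with rfl | rfl
    exacts [h1, h2]

lemma isCycleOf_ofLists (G H : Multigraph) (L E : List ℕ) (hlen : L.length = E.length)
    (hE : ∀ e ∈ E, e ∈ G.edges)
    (h : ∀ i, i < E.length →
      G.ends (E.getD i 0) = s(L.getD i 0, L.getD ((i + 1) % L.length) 0))
    (hLnd : L.Nodup) (hEnd : E.Nodup) (hne : E ≠ [])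
    (hLH : ∀ x ∈ L, x ∈ H.verts) (hEH : ∀ e ∈ E, e ∈ H.edges)
    (hends : ∀ e ∈ E, H.ends e = G.ends e) :
    IsCycleOf H (ofLists G L E hlen hE h) := by
  refine ⟨⟨?_, ?_, ?_⟩, L, E, hLnd, hEnd, hne, hlen, rfl, rfl, h⟩
  · intro x hx; exact hLH x (List.mem_toFinset.mp hx)
  · intro e he; exact hEH e (List.mem_toFinset.mp he)
  · intro e he; exact (hends e (List.mem_toFinset.mp he)).symm

end Multigraph

open Multigraph ListAux in
private lemma ends1_aux (G C P : Multigraph) (vs' es' pvs pes L1 E1 : List ℕ) (k m n : ℕ)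
    (hm : 0 < m) (hn : 0 < n) (hk0 : 0 < k) (hkn : k < n)
    (hL1len : L1.length = k + m) (hE1len : E1.length = k + m)
    (gE1a : ∀ i, i < k → E1.getD i 0 = es'.getD i 0)
    (gE1b : ∀ t, t < m → E1.getD (k + t) 0 = pes.getD (m - 1 - t) 0)
    (gL1a : ∀ i, i ≤ k → L1.getD i 0 = vs'.getD i 0)
    (gL1b : ∀ t, 1 ≤ t → t ≤ m - 1 → L1.getD (k + t) 0 = pvs.getD (m - t) 0)
    (hends' : ∀ i, i < n →
      C.ends (es'.getD i 0) = s(vs'.getD i 0, vs'.getD ((i + 1) % n) 0))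
    (hCendG' : ∀ i, i < n → G.ends (es'.getD i 0) = C.ends (es'.getD i 0))
    (hPendG' : ∀ t, t < m → G.ends (pes.getD t 0) = P.ends (pes.getD t 0))
    (hpends : ∀ i, i < m → P.ends (pes.getD i 0) = s(pvs.getD i 0, pvs.getD (i + 1) 0))
    (hwk2 : vs'.getD k 0 = pvs.getD m 0)
    (hv02 : vs'.getD 0 0 = pvs.getD 0 0) :
    ∀ i, i < E1.length →
      G.ends (E1.getD i 0) = s(L1.getD i 0, L1.getD ((i + 1) % L1.length) 0) := by
  intro i hi
  rw [hE1len] at hi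
  rw [hL1len]
  rcases Nat.lt_or_ge i k with hik | hik
  · rw [Nat.mod_eq_of_lt (by omega), gE1a i hik, gL1a i (by omega), gL1a (i + 1) (by omega),
      hCendG' i (by omega), hends' i (by omega), Nat.mod_eq_of_lt (by omega)]
  · obtain ⟨t, rfl⟩ : ∃ t, i = k + t := ⟨i - k, by omega⟩
    have htm : t < m := by omega
    have hG2 : G.ends (E1.getD (k + t) 0) = s(pvs.getD (m - 1 - t) 0, pvs.getD (m - t) 0) := by
      rw [gE1b t htm, hPendG' (m - 1 - t) (by omega), hpends (m - 1 - t) (by omega),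
        show m - 1 - t + 1 = m - t by omega]
    have hLi : L1.getD (k + t) 0 = pvs.getD (m - t) 0 := by
      rcases Nat.eq_zero_or_pos t with h | h
      · subst h
        rw [Nat.add_zero, gL1a k le_rfl, hwk2, Nat.sub_zero]
      · exact gL1b t h (by omega)
    have hLi1 : L1.getD ((k + t + 1) % (k + m)) 0 = pvs.getD (m - 1 - t) 0 := by
      rcases Nat.lt_or_ge (t + 1) m with hlt | hge
      · rw [Nat.mod_eq_of_lt (by omega), Nat.add_assoc k t 1,
          gL1b (t + 1) (by omega) (by omega), show m - (t + 1) = m - 1 - t by omega]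
      · rw [show k + t + 1 = k + m by omega, Nat.mod_self, gL1a 0 (by omega), hv02,
          show m - 1 - t = 0 by omega]
    rw [hG2, hLi, hLi1]
    exact Sym2.eq_swap

open Multigraph ListAux in
private lemma ends2_aux (G C P : Multigraph) (vs' es' pvs pes L2 E2 : List ℕ) (k m n : ℕ)
    (hm : 0 < m) (hn : 0 < n) (hk0 : 0 < k) (hkn : k < n)
    (hL2len : L2.length = (n - k) + m) (hE2len : E2.length = (n - k) + m)
    (gE2a : ∀ t, t < n - k → E2.getD t 0 = es'.getD (k + t) 0)
    (gE2b : ∀ t, t < m → E2.getD ((n - k) + t) 0 = pes.getD t 0)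
    (gL2a : ∀ t, t < n - k → L2.getD t 0 = vs'.getD (k + t) 0)
    (gL2b : ∀ t, t < m → L2.getD ((n - k) + t) 0 = pvs.getD t 0)
    (hends' : ∀ i, i < n →
      C.ends (es'.getD i 0) = s(vs'.getD i 0, vs'.getD ((i + 1) % n) 0))
    (hCendG' : ∀ i, i < n → G.ends (es'.getD i 0) = C.ends (es'.getD i 0))
    (hPendG' : ∀ t, t < m → G.ends (pes.getD t 0) = P.ends (pes.getD t 0))
    (hpends : ∀ i, i < m → P.ends (pes.getD i 0) = s(pvs.getD i 0, pvs.getD (i + 1) 0))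
    (hwk2 : vs'.getD k 0 = pvs.getD m 0)
    (hv02 : vs'.getD 0 0 = pvs.getD 0 0) :
    ∀ i, i < E2.length →
      G.ends (E2.getD i 0) = s(L2.getD i 0, L2.getD ((i + 1) % L2.length) 0) := by
  intro i hi
  rw [hE2len] at hi
  rw [hL2len]
  rcases Nat.lt_or_ge i (n - k) with hik | hik
  · rw [Nat.mod_eq_of_lt (by omega), gE2a i hik, hCendG' (k + i) (by omega),
      hends' (k + i) (by omega), gL2a i hik]
    rcases Nat.lt_or_ge (i + 1) (n - k) with hlt | hge
    · rw [Nat.mod_eq_of_lt (by omega : k + i + 1 < n), gL2a (i + 1) hlt,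
        ← Nat.add_assoc k i 1]
    · rw [show k + i + 1 = n by omega, Nat.mod_self,
        show i + 1 = n - k + 0 by omega, gL2b 0 (by omega), hv02]
  · obtain ⟨t, rfl⟩ : ∃ t, i = (n - k) + t := ⟨i - (n - k), by omega⟩
    have htm : t < m := by omega
    rw [gE2b t htm, hPendG' t (by omega), hpends t (by omega), gL2b t htm]
    rcases Nat.lt_or_ge (t + 1) m with hlt | hge
    · rw [Nat.mod_eq_of_lt (by omega), Nat.add_assoc (n - k) t 1, gL2b (t + 1) hlt]
    · have e1 : (n - k + t + 1) % (n - k + m) = 0 := by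
        rw [show n - k + t + 1 = n - k + m by omega, Nat.mod_self]
      have e2 : L2.getD 0 0 = pvs.getD (t + 1) 0 := by
        have e3 := gL2a 0 (by omega)
        rw [Nat.add_zero] at e3
        rw [e3, hwk2, show t + 1 = m by omega]
      rw [e1, e2]

set_option maxHeartbeats 1000000 in
open Multigraph ListAux in
lemma two_disjoint_helper
    (G : Multigraph) (S : Finset ℕ)
    (W : Multigraph) (hW : IsSCycleSubgraph G S W)
    (C : Multigraph) (hC : IsCycleOf W C)
    (v w : ℕ) (hv : v ∈ C.verts) (hw : w ∈ C.verts)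
    (P : Multigraph) (pvs pes : List ℕ) (hPL : IsWPathList G W P pvs pes)
    (h0 : pvs.getD 0 0 = v) (h1 : pvs.getD (pvs.length - 1) 0 = w)
    (hcycles : ∀ C₁ C₂, IsCycleOf (C.union P) C₁ → IsCycleOf (C.union P) C₂ →
      C₁.edges ≠ C.edges → C₂.edges ≠ C.edges → C₁.edges ≠ C₂.edges →
      ∃ C₁' C₂', IsCycleOf W C₁' ∧ IsCycleOf W C₂' ∧
        Disjoint C₁.verts C₁'.verts ∧ Disjoint C₂.verts C₂'.verts) :
    ∃ D₁ D₂, IsSCycle G S D₁ ∧ IsSCycle G S D₂ ∧ Disjoint D₁.verts D₂.verts := by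
  classical
  -- Unpack the path data
  obtain ⟨hPsub, ⟨hpnd, hpesnd, hplen, hpverts, hpedges, hpends⟩, hpesne, hp0W, hp1W, hint, hnotW⟩ := hPL
  have hm : 0 < pes.length := List.length_pos_iff.mpr hpesne
  set m := pes.length with hmdef
  have hplen' : pvs.length = m + 1 := hplen
  have hm' : pvs.getD m 0 = w := by
    have hh : pvs.length - 1 = m := by omega
    rwa [hh] at h1
  -- Unpack the cycle data
  have hCorig := hC
  obtain ⟨hCW, vs, es, hvnd, hesnd, hesne, hlen, hverts, hedges, hendsC⟩ := hC
  have hn : 0 < es.length := List.length_pos_iff.mpr hesne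
  set n := es.length with hndef
  have hlen' : vs.length = n := hlen
  -- basic edge/end facts
  have hCedW : ∀ e ∈ C.edges, e ∈ W.edges := fun e he => hCW.2.1 he
  have hCendG : ∀ e ∈ C.edges, G.ends e = C.ends e := fun e he =>
    ((hCW.2.2 e he).trans (hW.1.2.2 e (hCW.2.1 he))).symm
  have hPendG : ∀ e ∈ P.edges, G.ends e = P.ends e := fun e he => (hPsub.2.2 e he).symm
  -- v ≠ w
  have hvw : v ≠ w := by
    intro h
    have h2 : pvs.getD 0 0 = pvs.getD m 0 := by rw [h0, hm', h]
    rw [List.getD_eq_getElem pvs 0 (show 0 < pvs.length by omega),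
      List.getD_eq_getElem pvs 0 (show m < pvs.length by omega)] at h2
    have := hpnd.getElem_inj_iff.mp h2
    omega
  -- rotate the cycle so that v comes first
  obtain ⟨j, hj, hvj⟩ := List.mem_iff_getElem.mp (List.mem_toFinset.mp (hverts ▸ hv))
  have hjn : j < n := by omega
  have hvs'len : (vs.rotate j).length = n := by rw [List.length_rotate]; omega
  have hes'len : (es.rotate j).length = n := by rw [List.length_rotate]
  have hvs'nd : (vs.rotate j).Nodup := ((vs.rotate_perm j).nodup_iff).mpr hvnd
  have hes'nd : (es.rotate j).Nodup := ((es.rotate_perm j).nodup_iff).mpr hesnd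
  have hvs'fin : (vs.rotate j).toFinset = vs.toFinset := by
    ext a; simp only [List.mem_toFinset]; exact (vs.rotate_perm j).mem_iff
  have hes'fin : (es.rotate j).toFinset = es.toFinset := by
    ext a; simp only [List.mem_toFinset]; exact (es.rotate_perm j).mem_iff
  have hvsg : ∀ i, i < n → (vs.rotate j).getD i 0 = vs.getD ((i + j) % n) 0 := by
    intro i hi
    have := getD_rotate vs j i (by omega)
    rwa [hlen'] at this
  have hesg : ∀ i, i < n → (es.rotate j).getD i 0 = es.getD ((i + j) % n) 0 := by
    intro i hi
    exact getD_rotate es j i (by omega)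
  have hends' : ∀ i, i < n →
      C.ends ((es.rotate j).getD i 0) =
        s((vs.rotate j).getD i 0, (vs.rotate j).getD ((i + 1) % n) 0) := by
    intro i hi
    rw [hesg i hi, hvsg i hi, hvsg ((i + 1) % n) (Nat.mod_lt _ hn)]
    have h2 := hendsC ((i + j) % n) (Nat.mod_lt _ hn)
    rw [hlen'] at h2
    rw [h2, show ((i + j) % n + 1) % n = ((i + 1) % n + j) % n by
      rw [Nat.mod_add_mod, Nat.mod_add_mod, Nat.add_right_comm]]
  have hvs'memC : ∀ x ∈ vs.rotate j, x ∈ C.verts := by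
    intro x hx
    rw [hverts, ← hvs'fin]
    exact List.mem_toFinset.mpr hx
  have hvs'W : ∀ x ∈ vs.rotate j, x ∈ W.verts := fun x hx => hCW.1 (hvs'memC x hx)
  have hes'memC : ∀ e ∈ es.rotate j, e ∈ C.edges := by
    intro e he
    rw [hedges, ← hes'fin]
    exact List.mem_toFinset.mpr he
  have hv0 : (vs.rotate j).getD 0 0 = v := by
    rw [hvsg 0 hn, Nat.zero_add, Nat.mod_eq_of_lt hjn, List.getD_eq_getElem _ _ hj]
    exact hvj
  -- find w on the rotated cycle
  have hwvs' : w ∈ vs.rotate j := by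
    rw [← List.mem_toFinset, hvs'fin, ← hverts]; exact hw
  obtain ⟨k, hk, hwk⟩ := List.mem_iff_getElem.mp hwvs'
  have hkn : k < n := by omega
  have hwk' : (vs.rotate j).getD k 0 = w := by
    rw [List.getD_eq_getElem _ _ hk]; exact hwk
  have hk0 : 0 < k := by
    rcases Nat.eq_zero_or_pos k with h | h
    · rw [h] at hwk'
      exact (hvw (hv0.symm.trans hwk')).elim
    · exact h
  -- the four lists
  obtain ⟨L1, hL1def⟩ : ∃ L : List ℕ,
      L = (vs.rotate j).take (k + 1) ++ ((pvs.drop 1).dropLast).reverse := ⟨_, rfl⟩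
  obtain ⟨E1, hE1def⟩ : ∃ L : List ℕ, L = (es.rotate j).take k ++ pes.reverse := ⟨_, rfl⟩
  obtain ⟨L2, hL2def⟩ : ∃ L : List ℕ, L = (vs.rotate j).drop k ++ pvs.dropLast := ⟨_, rfl⟩
  obtain ⟨E2, hE2def⟩ : ∃ L : List ℕ, L = (es.rotate j).drop k ++ pes := ⟨_, rfl⟩
  have hIlen : ((pvs.drop 1).dropLast).length = m - 1 := by
    rw [List.length_dropLast, List.length_drop]; omega
  have hAlen : ((vs.rotate j).take (k + 1)).length = k + 1 := by
    rw [List.length_take]; omega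
  have hA'len : ((es.rotate j).take k).length = k := by
    rw [List.length_take]; omega
  have hL1len : L1.length = k + m := by
    rw [hL1def, List.length_append, hAlen, List.length_reverse, hIlen]; omega
  have hE1len : E1.length = k + m := by
    rw [hE1def, List.length_append, hA'len, List.length_reverse]
  have hL2len : L2.length = (n - k) + m := by
    rw [hL2def, List.length_append, List.length_drop, List.length_dropLast]; omega
  have hE2len : E2.length = (n - k) + m := by
    rw [hE2def, List.length_append, List.length_drop]; omega
  -- getD lemmas
  have gI : ∀ t, t < m - 1 → ((pvs.drop 1).dropLast).getD t 0 = pvs.getD (1 + t) 0 := by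
    intro t ht
    rw [getD_dropLast _ _ (by rw [List.length_drop]; omega), getD_drop _ _ _ (by omega)]
  have gL1a : ∀ i, i ≤ k → L1.getD i 0 = (vs.rotate j).getD i 0 := by
    intro i hi
    rw [hL1def, getD_append_lt _ _ _ (by rw [hAlen]; omega),
      getD_take _ _ _ (by omega) (by omega)]
  have gL1b : ∀ t, 1 ≤ t → t ≤ m - 1 → L1.getD (k + t) 0 = pvs.getD (m - t) 0 := by
    intro t ht1 ht2
    have hm2 : 2 ≤ m := by omega
    rw [hL1def, getD_append_ge _ _ _ (by rw [hAlen]; omega)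
      (by rw [hAlen, List.length_reverse, hIlen]; omega), hAlen,
      show k + t - (k + 1) = t - 1 by omega,
      getD_reverse _ _ (by rw [hIlen]; omega), hIlen,
      show m - 1 - 1 - (t - 1) = m - 1 - t by omega,
      gI (m - 1 - t) (by omega), show 1 + (m - 1 - t) = m - t by omega]
  have gE1a : ∀ i, i < k → E1.getD i 0 = (es.rotate j).getD i 0 := by
    intro i hi
    rw [hE1def, getD_append_lt _ _ _ (by rw [hA'len]; omega),
      getD_take _ _ _ (by omega) (by omega)]
  have gE1b : ∀ t, t < m → E1.getD (k + t) 0 = pes.getD (m - 1 - t) 0 := by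
    intro t ht
    rw [hE1def, getD_append_ge _ _ _ (by rw [hA'len]; omega)
      (by rw [hA'len, List.length_reverse]; omega), hA'len,
      show k + t - k = t by omega, getD_reverse _ _ (by omega),
      show m - 1 - t = m - 1 - t from rfl]
  have gL2a : ∀ t, t < n - k → L2.getD t 0 = (vs.rotate j).getD (k + t) 0 := by
    intro t ht
    rw [hL2def, getD_append_lt _ _ _ (by rw [List.length_drop]; omega),
      getD_drop _ _ _ (by omega)]
  have gL2b : ∀ t, t < m → L2.getD ((n - k) + t) 0 = pvs.getD t 0 := by
    intro t ht
    rw [hL2def, getD_append_ge _ _ _ (by rw [List.length_drop]; omega)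
      (by rw [List.length_drop, List.length_dropLast]; omega),
      List.length_drop, hvs'len, show n - k + t - (n - k) = t by omega,
      getD_dropLast _ _ (by omega)]
  have gE2a : ∀ t, t < n - k → E2.getD t 0 = (es.rotate j).getD (k + t) 0 := by
    intro t ht
    rw [hE2def, getD_append_lt _ _ _ (by rw [List.length_drop]; omega),
      getD_drop _ _ _ (by omega)]
  have gE2b : ∀ t, t < m → E2.getD ((n - k) + t) 0 = pes.getD t 0 := by
    intro t ht
    rw [hE2def, getD_append_ge _ _ _ (by rw [List.length_drop]; omega)
      (by rw [List.length_drop]; omega),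
      List.length_drop, hes'len, show n - k + t - (n - k) = t by omega]
  -- interior vertices avoid W
  have hImem : ∀ y ∈ (pvs.drop 1).dropLast, y ∉ W.verts := by
    intro y hy
    obtain ⟨t, ht, rfl⟩ := List.mem_iff_getElem.mp hy
    have ht' : t < m - 1 := by rw [hIlen] at ht; exact ht
    rw [← List.getD_eq_getElem _ 0 ht, gI t ht']
    exact hint (1 + t) (by omega) (by omega)
  have hIsub : ∀ y ∈ (pvs.drop 1).dropLast, y ∈ pvs := by
    intro y hy
    exact List.mem_of_mem_drop (List.mem_of_mem_dropLast hy)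
  -- Nodup facts
  have hL1nd : L1.Nodup := by
    rw [hL1def]
    refine (((vs.rotate j).take_sublist (k + 1)).nodup hvs'nd).append
      (List.nodup_reverse.mpr ((((pvs.drop 1).dropLast_sublist).trans
        (pvs.drop_sublist 1)).nodup hpnd)) ?_
    intro a ha hb
    exact hImem a (List.mem_reverse.mp hb) (hvs'W a (List.mem_of_mem_take ha))
  have hE1nd : E1.Nodup := by
    rw [hE1def]
    refine (((es.rotate j).take_sublist k).nodup hes'nd).append
      (List.nodup_reverse.mpr hpesnd) ?_
    intro a ha hb
    exact hnotW a (List.mem_reverse.mp hb) (hCedW _ (hes'memC a (List.mem_of_mem_take ha)))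
  have hL2nd : L2.Nodup := by
    rw [hL2def]
    refine (((vs.rotate j).drop_sublist k).nodup hvs'nd).append
      ((pvs.dropLast_sublist).nodup hpnd) ?_
    intro a ha hb
    have haW : a ∈ W.verts := hvs'W a (List.mem_of_mem_drop ha)
    have hav : a ≠ v := by
      intro hv'
      obtain ⟨t, ht, hat⟩ := List.mem_iff_getElem.mp ha
      have ht2 : t < (vs.rotate j).length - k := by rw [List.length_drop] at ht; exact ht
      rw [List.getElem_drop] at hat
      have hg0 : (vs.rotate j)[0]'(by omega) = v := by
        rw [← List.getD_eq_getElem _ 0 (by omega)]; exact hv0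
      have := hvs'nd.getElem_inj_iff.mp (hat.trans (hv'.trans hg0.symm))
      omega
    obtain ⟨t', ht', hat'⟩ := List.mem_iff_getElem.mp hb
    have ht'2 : t' < m := by rw [List.length_dropLast] at ht'; omega
    have hav' : a = pvs.getD t' 0 := by
      rw [← hat', ← List.getD_eq_getElem _ 0 ht', getD_dropLast _ _ (by omega)]
    rcases Nat.eq_zero_or_pos t' with h | h
    · exact hav (by rw [hav', h]; exact h0)
    · exact hint t' h (by omega) (hav' ▸ haW)
  have hE2nd : E2.Nodup := by
    rw [hE2def]
    refine (((es.rotate j).drop_sublist k).nodup hes'nd).append hpesnd ?_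
    intro a ha hb
    exact hnotW a hb (hCedW _ (hes'memC a (List.mem_of_mem_drop ha)))
  -- edges of E1, E2 lie in G
  have hE1G : ∀ e ∈ E1, e ∈ G.edges := by
    intro e he
    rcases List.mem_append.mp (hE1def ▸ he) with h | h
    · exact hW.1.2.1 (hCedW _ (hes'memC _ (List.mem_of_mem_take h)))
    · exact hPsub.2.1 (by rw [hpedges]; exact List.mem_toFinset.mpr (List.mem_reverse.mp h))
  have hE2G : ∀ e ∈ E2, e ∈ G.edges := by
    intro e he
    rcases List.mem_append.mp (hE2def ▸ he) with h | h
    · exact hW.1.2.1 (hCedW _ (hes'memC _ (List.mem_of_mem_drop h)))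
    · exact hPsub.2.1 (by rw [hpedges]; exact List.mem_toFinset.mpr h)
  -- ends conditions
  have hCendG' : ∀ i, i < n → G.ends ((es.rotate j).getD i 0) = C.ends ((es.rotate j).getD i 0) :=
    fun i hi => hCendG _ (hes'memC _ (getD_mem (es.rotate j) i (by omega)))
  have hPendG' : ∀ t, t < m → G.ends (pes.getD t 0) = P.ends (pes.getD t 0) :=
    fun t ht => hPendG _ (by rw [hpedges]; exact List.mem_toFinset.mpr (getD_mem pes _ (by omega)))
  have hwk2 : (vs.rotate j).getD k 0 = pvs.getD m 0 := by rw [hwk', hm']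
  have hv02 : (vs.rotate j).getD 0 0 = pvs.getD 0 0 := by rw [hv0, h0]
  have hE1ends := ends1_aux G C P (vs.rotate j) (es.rotate j) pvs pes L1 E1 k m n
    hm hn hk0 hkn hL1len hE1len gE1a gE1b gL1a gL1b hends' hCendG' hPendG' hpends hwk2 hv02
  have hE2ends := ends2_aux G C P (vs.rotate j) (es.rotate j) pvs pes L2 E2 k m n
    hm hn hk0 hkn hL2len hE2len gE2a gE2b gL2a gL2b hends' hCendG' hPendG' hpends hwk2 hv02
  -- nonemptiness
  have hE1ne : E1 ≠ [] := by
    intro h; rw [h] at hE1len; simp at hE1len; omega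
  have hE2ne : E2 ≠ [] := by
    intro h; rw [h] at hE2len; simp at hE2len; omega
  -- membership in C.union P and in G
  have hL1U : ∀ x ∈ L1, x ∈ (C.union P).verts := by
    intro x hx
    show x ∈ C.verts ∪ P.verts
    rw [Finset.mem_union]
    rcases List.mem_append.mp (hL1def ▸ hx) with h | h
    · exact Or.inl (hvs'memC x (List.mem_of_mem_take h))
    · exact Or.inr (by rw [hpverts]; exact List.mem_toFinset.mpr (hIsub x (List.mem_reverse.mp h)))
  have hL2U : ∀ x ∈ L2, x ∈ (C.union P).verts := by
    intro x hx
    show x ∈ C.verts ∪ P.verts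
    rw [Finset.mem_union]
    rcases List.mem_append.mp (hL2def ▸ hx) with h | h
    · exact Or.inl (hvs'memC x (List.mem_of_mem_drop h))
    · exact Or.inr (by rw [hpverts]; exact List.mem_toFinset.mpr (List.mem_of_mem_dropLast h))
  have hE1U : ∀ e ∈ E1, e ∈ (C.union P).edges := by
    intro e he
    show e ∈ C.edges ∪ P.edges
    rw [Finset.mem_union]
    rcases List.mem_append.mp (hE1def ▸ he) with h | h
    · exact Or.inl (hes'memC _ (List.mem_of_mem_take h))
    · exact Or.inr (by rw [hpedges]; exact List.mem_toFinset.mpr (List.mem_reverse.mp h))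
  have hE2U : ∀ e ∈ E2, e ∈ (C.union P).edges := by
    intro e he
    show e ∈ C.edges ∪ P.edges
    rw [Finset.mem_union]
    rcases List.mem_append.mp (hE2def ▸ he) with h | h
    · exact Or.inl (hes'memC _ (List.mem_of_mem_drop h))
    · exact Or.inr (by rw [hpedges]; exact List.mem_toFinset.mpr h)
  have hUends : ∀ X : List ℕ, (∀ e ∈ X, e ∈ (C.union P).edges) →
      ∀ e ∈ X, (C.union P).ends e = G.ends e := by
    intro X hXU e he
    show (if e ∈ C.edges then C.ends e else P.ends e) = G.ends e
    by_cases h : e ∈ C.edges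
    · rw [if_pos h]; exact (hCendG e h).symm
    · rw [if_neg h]
      have hep : e ∈ P.edges := by
        have := hXU e he
        rw [show (C.union P).edges = C.edges ∪ P.edges from rfl, Finset.mem_union] at this
        exact this.resolve_left h
      exact (hPendG e hep).symm
  have hL1G : ∀ x ∈ L1, x ∈ G.verts := by
    intro x hx
    rcases List.mem_append.mp (hL1def ▸ hx) with h | h
    · exact hW.1.1 (hCW.1 (hvs'memC x (List.mem_of_mem_take h)))
    · exact hPsub.1 (by rw [hpverts]; exact List.mem_toFinset.mpr (hIsub x (List.mem_reverse.mp h)))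
  have hL2G : ∀ x ∈ L2, x ∈ G.verts := by
    intro x hx
    rcases List.mem_append.mp (hL2def ▸ hx) with h | h
    · exact hW.1.1 (hCW.1 (hvs'memC x (List.mem_of_mem_drop h)))
    · exact hPsub.1 (by rw [hpverts]; exact List.mem_toFinset.mpr (List.mem_of_mem_dropLast h))
  -- build the two cycles
  have hlen1 : L1.length = E1.length := hL1len.trans hE1len.symm
  have hlen2 : L2.length = E2.length := hL2len.trans hE2len.symm
  obtain ⟨C1, hC1v, hC1e, hC1cyc, hC1G⟩ :
      ∃ C1 : Multigraph, C1.verts = L1.toFinset ∧ C1.edges = E1.toFinset ∧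
        IsCycleOf (C.union P) C1 ∧ IsCycleOf G C1 :=
    ⟨ofLists G L1 E1 hlen1 hE1G hE1ends, rfl, rfl,
      isCycleOf_ofLists G (C.union P) L1 E1 hlen1 hE1G hE1ends hL1nd hE1nd hE1ne hL1U hE1U
        (hUends E1 hE1U),
      isCycleOf_ofLists G G L1 E1 hlen1 hE1G hE1ends hL1nd hE1nd hE1ne hL1G hE1G
        (fun e _ => rfl)⟩
  obtain ⟨C2, hC2v, hC2e, hC2cyc, hC2G⟩ :
      ∃ C2 : Multigraph, C2.verts = L2.toFinset ∧ C2.edges = E2.toFinset ∧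
        IsCycleOf (C.union P) C2 ∧ IsCycleOf G C2 :=
    ⟨ofLists G L2 E2 hlen2 hE2G hE2ends, rfl, rfl,
      isCycleOf_ofLists G (C.union P) L2 E2 hlen2 hE2G hE2ends hL2nd hE2nd hE2ne hL2U hE2U
        (hUends E2 hE2U),
      isCycleOf_ofLists G G L2 E2 hlen2 hE2G hE2ends hL2nd hE2nd hE2ne hL2G hE2G
        (fun e _ => rfl)⟩
  -- the three edge-set distinctions
  have hpe0 : pes.getD 0 0 ∈ pes := getD_mem pes 0 hm
  have hne1 : C1.edges ≠ C.edges := by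
    intro h
    have h2 : pes.getD 0 0 ∈ C1.edges := by
      rw [hC1e, List.mem_toFinset, hE1def]
      exact List.mem_append.mpr (Or.inr (List.mem_reverse.mpr hpe0))
    rw [h] at h2
    exact hnotW _ hpe0 (hCedW _ h2)
  have hne2 : C2.edges ≠ C.edges := by
    intro h
    have h2 : pes.getD 0 0 ∈ C2.edges := by
      rw [hC2e, List.mem_toFinset, hE2def]
      exact List.mem_append.mpr (Or.inr hpe0)
    rw [h] at h2
    exact hnotW _ hpe0 (hCedW _ h2)
  have hne12 : C1.edges ≠ C2.edges := by
    intro h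
    have hf : (es.rotate j).getD 0 0 ∈ E1 := by
      rw [hE1def]
      refine List.mem_append.mpr (Or.inl ?_)
      rw [← getD_take (es.rotate j) k 0 hk0 (by omega)]
      exact getD_mem _ 0 (by rw [hA'len]; omega)
    have hf2 : (es.rotate j).getD 0 0 ∈ E2 := by
      have h2 : (es.rotate j).getD 0 0 ∈ C1.edges := by
        rw [hC1e]
        exact List.mem_toFinset.mpr hf
      rw [h, hC2e] at h2
      exact List.mem_toFinset.mp h2
    rcases List.mem_append.mp (hE2def ▸ hf2) with h' | h'
    · obtain ⟨t, ht, hat⟩ := List.mem_iff_getElem.mp h'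
      have ht2 : t < (es.rotate j).length - k := by rw [List.length_drop] at ht; exact ht
      rw [List.getElem_drop] at hat
      rw [List.getD_eq_getElem _ 0 (by omega)] at hat
      have := hes'nd.getElem_inj_iff.mp hat
      omega
    · exact hnotW _ h' (hCedW _ (hes'memC _ (getD_mem (es.rotate j) 0 (by omega))))
  -- coverage of C's vertices
  have hcover : ∀ x ∈ C.verts, x ∈ C1.verts ∨ x ∈ C2.verts := by
    intro x hx
    have hx' : x ∈ vs.rotate j := by
      rw [← List.mem_toFinset, hvs'fin, ← hverts]; exact hx
    obtain ⟨i, hi, rfl⟩ := List.mem_iff_getElem.mp hx'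
    have hin : i < n := by omega
    rcases Nat.lt_or_ge i (k + 1) with h | h
    · left
      have h2 := gL1a i (by omega)
      rw [List.getD_eq_getElem _ _ hi] at h2
      rw [hC1v, List.mem_toFinset, ← h2]
      exact getD_mem _ _ (by rw [hL1len]; omega)
    · right
      have h2 := gL2a (i - k) (by omega)
      rw [show k + (i - k) = i by omega, List.getD_eq_getElem _ _ hi] at h2
      rw [hC2v, List.mem_toFinset, ← h2]
      exact getD_mem _ _ (by rw [hL2len]; omega)
  -- apply the hypothesis and conclude
  obtain ⟨C₁', C₂', hc1', hc2', hd1, hd2⟩ := hcycles C1 C2 hC1cyc hC2cyc hne1 hne2 hne12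
  by_cases hs1 : (C1.verts ∩ S).Nonempty
  · exact ⟨C1, C₁', ⟨hC1G, hs1⟩, ⟨hc1'.trans hW.1, hW.2 _ hc1'⟩, hd1⟩
  by_cases hs2 : (C2.verts ∩ S).Nonempty
  · exact ⟨C2, C₂', ⟨hC2G, hs2⟩, ⟨hc2'.trans hW.1, hW.2 _ hc2'⟩, hd2⟩
  exfalso
  obtain ⟨x, hx⟩ := hW.2 C hCorig
  rw [Finset.mem_inter] at hx
  rcases hcover x hx.1 with h | h
  · exact hs1 ⟨x, Finset.mem_inter.mpr ⟨h, hx.2⟩⟩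
  · exact hs2 ⟨x, Finset.mem_inter.mpr ⟨h, hx.2⟩⟩

open Multigraph in
/-- Let `(G, S)` be a rooted graph containing an S-cycle subgraph `W`, let `C` be a cycle
of `W`, `v, w ∈ V(C)`, and `P` a `(W, {v}, {w})`-path.  If for any two distinct cycles
`C₁, C₂` of `C ∪ P` other than `C` there are cycles `C₁', C₂'` of `W` with `Cᵢ`
vertex-disjoint from `Cᵢ'`, then `G` has two vertex-disjoint S-cycles. -/
theorem two_disjoint_scycles_of_wpath_on_cycle
    (G : Multigraph) (S : Finset ℕ) (hS : S ⊆ G.verts)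
    (W : Multigraph) (hW : IsSCycleSubgraph G S W)
    (C : Multigraph) (hC : IsCycleOf W C)
    (v w : ℕ) (hv : v ∈ C.verts) (hw : w ∈ C.verts)
    (P : Multigraph) (hP : IsWPathBtw G W P {v} {w})
    (hcycles : ∀ C₁ C₂, IsCycleOf (C.union P) C₁ → IsCycleOf (C.union P) C₂ →
      C₁.edges ≠ C.edges → C₂.edges ≠ C.edges → C₁.edges ≠ C₂.edges →
      ∃ C₁' C₂', IsCycleOf W C₁' ∧ IsCycleOf W C₂' ∧
        Disjoint C₁.verts C₁'.verts ∧ Disjoint C₂.verts C₂'.verts) :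
    ∃ D₁ D₂, IsSCycle G S D₁ ∧ IsSCycle G S D₂ ∧ Disjoint D₁.verts D₂.verts := by
  obtain ⟨pvs, pes, hPL, hor⟩ := hP
  rcases hor with ⟨ha, hb⟩ | ⟨ha, hb⟩ <;> rw [Finset.mem_singleton] at ha hb
  · exact two_disjoint_helper G S W hW C hC v w hv hw P pvs pes hPL ha hb hcycles
  · exact two_disjoint_helper G S W hW C hC w v hw hv P pvs pes hPL ha hb hcycles
end
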